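/- arXiv:2509.00383 — 8 statements merged into one kernel-verified Lean document; each statement's English description precedes it below -/
import Mathlib

section
/- Let G be a connected graph, r a vertex of G, and F a set of edges that is good with respect to r (i.e., F contains all edges uv with dist(u,r)=dist(v,r), and for each vertex u ≠ r, F contains exactly |B_r(u)|−1 of the edges in B_r(u), where B_r(u) is the set of edges uv with dist(u,r)=dist(v,r)+1). Then the subgraph T_F obtained by deleting the edges of F from G is a spanning tree of G. -/
open SimpleGraph

variable {V : Type*}

/-- `B_r(u)`: the set of edges `uv` with `dist(u,r) = dist(v,r) + 1`. -/
def brSet (G : SimpleGraph V) (r u : V) : Set (Sym2 V) :=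
  {e | ∃ v : V, e = s(u, v) ∧ G.Adj u v ∧ G.dist u r = G.dist v r + 1}

/-- `F` is a good edge set with respect to the root `r`: it contains all horizontal
edges and, for every `u ≠ r`, exactly `|B_r(u)| - 1` edges of `B_r(u)`. -/
def IsGoodEdgeSet (G : SimpleGraph V) (r : V) (F : Set (Sym2 V)) : Prop :=
  F ⊆ G.edgeSet ∧
  (∀ u v : V, G.Adj u v → G.dist u r = G.dist v r → s(u, v) ∈ F) ∧
  (∀ u : V, u ≠ r → (brSet G r u ∩ F).ncard = (brSet G r u).ncard - 1)

/-- Cyclomatic number `m - n + 1` of a connected graph (written `m + 1 - n`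
to be correct in `ℕ`). -/
noncomputable def cyclomatic [Fintype V] (G : SimpleGraph V) : ℕ :=
  G.edgeSet.ncard + 1 - Fintype.card V

/-- Number of leaves (degree-1 vertices). -/
noncomputable def numLeaves (G : SimpleGraph V) : ℕ :=
  {v : V | (G.neighborSet v).ncard = 1}.ncard

/-- Distance from a vertex to an edge: minimum over the two endpoints. -/
noncomputable def edgeDist (G : SimpleGraph V) (v : V) : Sym2 V → ℕ :=
  Sym2.lift ⟨fun a b => min (G.dist v a) (G.dist v b), fun a b => min_comm _ _⟩

def IsResolving (G : SimpleGraph V) (S : Set V) : Prop :=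
  ∀ x y : V, x ≠ y → ∃ s ∈ S, G.dist s x ≠ G.dist s y

def IsEdgeResolving (G : SimpleGraph V) (S : Set V) : Prop :=
  ∀ e ∈ G.edgeSet, ∀ f ∈ G.edgeSet, e ≠ f → ∃ s ∈ S, edgeDist G s e ≠ edgeDist G s f

/-- Distance from a vertex to a mixed element (vertex or edge). -/
noncomputable def mixedDist (G : SimpleGraph V) (s : V) : V ⊕ Sym2 V → ℕ
  | Sum.inl v => G.dist s v
  | Sum.inr e => edgeDist G s e

/-- Membership in `V(G) ∪ E(G)`. -/
def IsMixedElem (G : SimpleGraph V) : V ⊕ Sym2 V → Prop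
  | Sum.inl _ => True
  | Sum.inr e => e ∈ G.edgeSet

def IsMixedResolving (G : SimpleGraph V) (S : Set V) : Prop :=
  ∀ x y : V ⊕ Sym2 V, IsMixedElem G x → IsMixedElem G y → x ≠ y →
    ∃ s ∈ S, mixedDist G s x ≠ mixedDist G s y

noncomputable def metricDim (G : SimpleGraph V) : ℕ :=
  sInf {k | ∃ S : Set V, IsResolving G S ∧ S.ncard = k}

noncomputable def edgeMetricDim (G : SimpleGraph V) : ℕ :=
  sInf {k | ∃ S : Set V, IsEdgeResolving G S ∧ S.ncard = k}

noncomputable def mixedMetricDim (G : SimpleGraph V) : ℕ :=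
  sInf {k | ∃ S : Set V, IsMixedResolving G S ∧ S.ncard = k}

/-- `v` is a cut-vertex: removing it disconnects the graph. -/
def IsCutVertex (G : SimpleGraph V) (v : V) : Prop :=
  ¬ (G.induce {u : V | u ≠ v}).Connected

/-- The set of endpoints of a set of edges. -/
def endpoints (F : Set (Sym2 V)) : Set V := {v | ∃ e ∈ F, v ∈ e}

def IsGeodetic (G : SimpleGraph V) (S : Set V) : Prop :=
  ∀ v : V, ∃ x ∈ S, ∃ y ∈ S, ∃ p : G.Walk x y,
    p.IsPath ∧ p.length = G.dist x y ∧ v ∈ p.support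

noncomputable def geodeticNumber (G : SimpleGraph V) : ℕ :=
  sInf {k | ∃ S : Set V, IsGeodetic G S ∧ S.ncard = k}

/-- Monitoring edge-geodetic set: every edge lies on all shortest paths between
some two vertices of `S`. -/
def IsMEG (G : SimpleGraph V) (S : Set V) : Prop :=
  ∀ e ∈ G.edgeSet, ∃ x ∈ S, ∃ y ∈ S,
    ∀ p : G.Walk x y, p.length = G.dist x y → e ∈ p.edges

noncomputable def megNumber (G : SimpleGraph V) : ℕ :=
  sInf {k | ∃ S : Set V, IsMEG G S ∧ S.ncard = k}

/-- Distance-edge-monitoring set. -/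
def IsDEM (G : SimpleGraph V) (S : Set V) : Prop :=
  ∀ e ∈ G.edgeSet, ∃ x ∈ S, ∃ y : V,
    ∀ p : G.Walk x y, p.length = G.dist x y → e ∈ p.edges

noncomputable def demNumber (G : SimpleGraph V) : ℕ :=
  sInf {k | ∃ S : Set V, IsDEM G S ∧ S.ncard = k}

lemma adj_dist_le {G : SimpleGraph V} (hG : G.Connected) {a b : V} (h : G.Adj a b) (r : V) :
    G.dist a r ≤ G.dist b r + 1 := by
  obtain ⟨p, hp⟩ := hG.exists_walk_length_eq_dist b r
  calc G.dist a r ≤ (SimpleGraph.Walk.cons h p).length := SimpleGraph.dist_le _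
    _ = G.dist b r + 1 := by simp [hp]

lemma exists_parent {G : SimpleGraph V} (hG : G.Connected) {u r : V} (hu : u ≠ r) :
    ∃ v, G.Adj u v ∧ G.dist u r = G.dist v r + 1 := by
  obtain ⟨p, hp⟩ := hG.exists_walk_length_eq_dist u r
  cases p with
  | nil => exact absurd rfl hu
  | @cons _ v _ h q =>
      refine ⟨v, h, le_antisymm (adj_dist_le hG h r) ?_⟩
      have : G.dist v r ≤ q.length := SimpleGraph.dist_le _
      simp only [SimpleGraph.Walk.length_cons] at hp
      omega

lemma unique_parent [Fintype V] {G : SimpleGraph V} (hG : G.Connected) {r : V}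
    {F : Set (Sym2 V)}
    (h3 : ∀ u : V, u ≠ r → (brSet G r u ∩ F).ncard = (brSet G r u).ncard - 1)
    {u : V} (hu : u ≠ r) : ∃ e, brSet G r u \ F = {e} := by
  classical
  have hfin : (brSet G r u).Finite := Set.toFinite _
  obtain ⟨v, hv, hd⟩ := exists_parent hG hu
  have hne : (brSet G r u).Nonempty := ⟨s(u, v), v, rfl, hv, hd⟩
  have hpos : 0 < (brSet G r u).ncard := hne.ncard_pos hfin
  have hsub : brSet G r u ∩ F ⊆ brSet G r u := Set.inter_subset_left
  have hle : (brSet G r u ∩ F).ncard ≤ (brSet G r u).ncard := Set.ncard_le_ncard hsub hfin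
  have hdiff : (brSet G r u \ F).ncard = 1 := by
    have : brSet G r u \ F = brSet G r u \ (brSet G r u ∩ F) := by
      ext e; simp only [Set.mem_diff, Set.mem_inter_iff]; tauto
    rw [this, Set.ncard_diff hsub (hfin.subset hsub), h3 u hu]
    omega
  exact Set.ncard_eq_one.mp hdiff

/-- In the good-set situation, there is a unique surviving parent edge for `u ≠ r`. -/
lemma parent_spec [Fintype V] {G : SimpleGraph V} (hG : G.Connected) {r : V}
    {F : Set (Sym2 V)} (hF : IsGoodEdgeSet G r F) {u : V} (hu : u ≠ r) :
    ∃ v, G.Adj u v ∧ G.dist u r = G.dist v r + 1 ∧ s(u, v) ∉ F ∧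
      ∀ w, G.Adj u w → G.dist u r = G.dist w r + 1 → s(u, w) ∉ F → w = v := by
  obtain ⟨e, he⟩ := unique_parent hG hF.2.2 hu
  have hemem : e ∈ brSet G r u \ F := he ▸ rfl
  obtain ⟨⟨v, rfl, hadj, hdist⟩, hnF⟩ := hemem
  refine ⟨v, hadj, hdist, hnF, fun w hw hdw hwF => ?_⟩
  have : s(u, w) ∈ brSet G r u \ F := ⟨⟨w, rfl, hw, hdw⟩, hwF⟩
  rw [he, Set.mem_singleton_iff, Sym2.eq_iff] at this
  rcases this with ⟨-, h⟩ | ⟨h1, h2⟩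
  · exact h
  · exact absurd h2 hw.ne'

lemma dist_eq_parent_of_T_adj [Fintype V] {G : SimpleGraph V} (hG : G.Connected) {r : V}
    {F : Set (Sym2 V)} (hF : IsGoodEdgeSet G r F) {u w : V}
    (h : (G.deleteEdges F).Adj u w) (hle : G.dist w r ≤ G.dist u r) :
    G.dist u r = G.dist w r + 1 := by
  rw [SimpleGraph.deleteEdges_adj] at h
  obtain ⟨hadj, hnF⟩ := h
  have hne : G.dist u r ≠ G.dist w r := fun hh => hnF (hF.2.1 u w hadj hh)
  have := adj_dist_le hG hadj r
  omega

lemma T_connected [Fintype V] {G : SimpleGraph V} (hG : G.Connected) {r : V}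
    {F : Set (Sym2 V)} (hF : IsGoodEdgeSet G r F) : (G.deleteEdges F).Connected := by
  have hreach : ∀ n u, G.dist u r = n → (G.deleteEdges F).Reachable u r := by
    intro n
    induction n using Nat.strong_induction_on with
    | _ n ih =>
      intro u hd
      by_cases hu : u = r
      · subst hu; exact SimpleGraph.Reachable.refl _
      · obtain ⟨v, hadj, hdist, hnF, -⟩ := parent_spec hG hF hu
        have hTadj : (G.deleteEdges F).Adj u v := by
          rw [SimpleGraph.deleteEdges_adj]; exact ⟨hadj, hnF⟩
        exact hTadj.reachable.trans (ih (G.dist v r) (by omega) v rfl)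
  have hpre : (G.deleteEdges F).Preconnected := fun a b =>
    (hreach _ a rfl).trans (hreach _ b rfl).symm
  have := hG.nonempty
  exact ⟨hpre⟩

lemma T_acyclic [Fintype V] {G : SimpleGraph V} (hG : G.Connected) {r : V}
    {F : Set (Sym2 V)} (hF : IsGoodEdgeSet G r F) : (G.deleteEdges F).IsAcyclic := by
  classical
  intro v c hc
  obtain ⟨m, hm, hmax⟩ := c.support.toFinset.exists_max_image (fun y => G.dist y r)
    ⟨v, by simp [c.start_mem_support]⟩
  rw [List.mem_toFinset] at hm
  have hmax' : ∀ y ∈ c.support, G.dist y r ≤ G.dist m r := fun y hy =>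
    hmax y (List.mem_toFinset.mpr hy)
  let c' : (G.deleteEdges F).Walk m m := c.rotate m hm
  have hc' : c'.IsCycle := hc.rotate hm
  have hsup : ∀ y ∈ c'.support, y ∈ c.support := by
    intro y hy
    rw [SimpleGraph.Walk.support_eq_cons c', List.mem_cons] at hy
    rcases hy with hy | hy
    · exact hy ▸ hm
    · have := (SimpleGraph.Walk.support_rotate c m hm).mem_iff.mp hy
      exact List.mem_of_mem_tail this
  obtain ⟨w, hadj1, q, hq⟩ := SimpleGraph.Walk.not_nil_iff.mp hc'.not_nil
  have hqnn : ¬ q.reverse.Nil := by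
    rw [SimpleGraph.Walk.not_nil_iff_lt_length, SimpleGraph.Walk.length_reverse]
    rw [← SimpleGraph.Walk.not_nil_iff_lt_length]
    exact SimpleGraph.Walk.not_nil_of_ne hadj1.ne'
  obtain ⟨x, hadj2, q2, hq2⟩ := SimpleGraph.Walk.not_nil_iff.mp hqnn
  -- x ≠ w
  have hnodup : c'.edges.Nodup := hc'.isCircuit.isTrail.edges_nodup
  have hxq : s(m, x) ∈ q.edges := by
    have : s(m, x) ∈ q.reverse.edges := by rw [hq2]; simp
    rwa [SimpleGraph.Walk.edges_reverse, List.mem_reverse] at this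
  have hxw : x ≠ w := by
    intro h
    rw [hq, SimpleGraph.Walk.edges_cons] at hnodup
    subst h
    exact (List.nodup_cons.mp hnodup).1 hxq
  -- memberships
  have hwmem : w ∈ c.support := hsup w (by rw [hq]; simp [SimpleGraph.Walk.support_cons,
    q.start_mem_support])
  have hxmem : x ∈ c.support := by
    apply hsup
    rw [hq, SimpleGraph.Walk.support_cons]
    have : x ∈ q.reverse.support := by rw [hq2]; simp [q2.start_mem_support]
    rw [SimpleGraph.Walk.support_reverse, List.mem_reverse] at this
    exact List.mem_cons_of_mem _ this
  -- distances
  have hdw : G.dist m r = G.dist w r + 1 :=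
    dist_eq_parent_of_T_adj hG hF hadj1 (hmax' w hwmem)
  have hdx : G.dist m r = G.dist x r + 1 :=
    dist_eq_parent_of_T_adj hG hF hadj2 (hmax' x hxmem)
  have hmr : m ≠ r := by
    intro h
    rw [h, SimpleGraph.dist_self] at hdw
    omega
  obtain ⟨p, -, -, -, huniq⟩ := parent_spec hG hF hmr
  have h1 := SimpleGraph.deleteEdges_adj.mp hadj1
  have h2 := SimpleGraph.deleteEdges_adj.mp hadj2
  exact hxw ((huniq x h2.1 hdx h2.2).trans (huniq w h1.1 hdw h1.2).symm)

theorem stmt_0 [Fintype V] (G : SimpleGraph V) (hG : G.Connected) (r : V)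
    (F : Set (Sym2 V)) (hF : IsGoodEdgeSet G r F) :
    (G.deleteEdges F).IsTree := ⟨T_connected hG hF, T_acyclic hG hF⟩
end

section
/- Let G be a connected graph, r a vertex, and F a good edge set with respect to r. Then every path in the tree T_F from r to a leaf of T_F is an isometric (shortest) path in G. -/
open SimpleGraph

variable {V : Type*}

lemma step_lemma [Fintype V] (G : SimpleGraph V) (hG : G.Connected) (r : V)
    (F : Set (Sym2 V)) (hF : IsGoodEdgeSet G r F) {u w : V}
    (h : (G.deleteEdges F).Adj u w) :
    G.dist u r = G.dist w r + 1 ∨ G.dist w r = G.dist u r + 1 := by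
  rw [deleteEdges_adj] at h
  obtain ⟨hadj, hne⟩ := h
  have h1 : G.dist u r ≤ G.dist w r + 1 := by
    have := hG.dist_triangle (u := u) (v := w) (w := r)
    rwa [dist_eq_one_iff_adj.mpr hadj, add_comm] at this
  have h2 : G.dist w r ≤ G.dist u r + 1 := by
    have := hG.dist_triangle (u := w) (v := u) (w := r)
    rwa [dist_eq_one_iff_adj.mpr hadj.symm, add_comm] at this
  have hne' : G.dist u r ≠ G.dist w r := fun he => hne (hF.2.1 u w hadj he)
  omega

lemma unique_down [Fintype V] (G : SimpleGraph V) (r : V)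
    (F : Set (Sym2 V)) (hF : IsGoodEdgeSet G r F) {u a b : V} (hu : u ≠ r)
    (ha : (G.deleteEdges F).Adj u a) (hb : (G.deleteEdges F).Adj u b)
    (hda : G.dist u r = G.dist a r + 1) (hdb : G.dist u r = G.dist b r + 1) :
    a = b := by
  rw [deleteEdges_adj] at ha hb
  have hma : s(u, a) ∈ brSet G r u \ F := ⟨⟨a, rfl, ha.1, hda⟩, ha.2⟩
  have hmb : s(u, b) ∈ brSet G r u \ F := ⟨⟨b, rfl, hb.1, hdb⟩, hb.2⟩
  have hsub : brSet G r u ∩ F ⊆ brSet G r u := Set.inter_subset_left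
  have hdiff : (brSet G r u \ (brSet G r u ∩ F)).ncard
      = (brSet G r u).ncard - (brSet G r u ∩ F).ncard :=
    Set.ncard_diff hsub (Set.toFinite _)
  rw [Set.diff_self_inter, hF.2.2 u hu] at hdiff
  have hle : (brSet G r u \ F).ncard ≤ 1 := by omega
  have := (Set.ncard_le_one_iff (Set.toFinite _)).mp hle hma hmb
  rw [Sym2.eq_iff] at this
  rcases this with ⟨-, h⟩ | ⟨h1, h2⟩
  · exact h
  · exact h2.trans h1

lemma ascend [Fintype V] (G : SimpleGraph V) (hG : G.Connected) (r : V)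
    (F : Set (Sym2 V)) (hF : IsGoodEdgeSet G r F) {v : V} :
    ∀ {u : V} (p : (G.deleteEdges F).Walk u v), p.IsPath →
      (∀ (w : V) (h : (G.deleteEdges F).Adj u w) (q : (G.deleteEdges F).Walk w v),
        p = Walk.cons h q → G.dist w r = G.dist u r + 1) →
      G.dist v r = G.dist u r + p.length := by
  intro u p
  induction p with
  | nil => simp
  | @cons u w v h q ih =>
    intro hp hfirst
    have hwu : G.dist w r = G.dist u r + 1 := hfirst w h q rfl
    have hq : q.IsPath := hp.of_cons
    have husup : u ∉ q.support := by
      have := hp.support_nodup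
      rw [Walk.support_cons] at this
      exact (List.nodup_cons.mp this).1
    have hrec := ih hq ?_
    · rw [Walk.length_cons, hrec, hwu]; omega
    · intro x h' q' heq
      rcases step_lemma G hG r F hF h' with hd | hu'
      · exfalso
        have hwr : w ≠ r := by
          intro hwr; rw [hwr, dist_self] at hwu; omega
        have : x = u := unique_down G r F hF hwr h' h.symm hd hwu
        apply husup
        rw [← this, heq, Walk.support_cons]
        exact List.mem_cons_of_mem _ q'.start_mem_support
      · exact hu'

theorem stmt_1 [Fintype V] (G : SimpleGraph V) (hG : G.Connected) (r : V)
    (F : Set (Sym2 V)) (hF : IsGoodEdgeSet G r F)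
    (v : V) (hleaf : ((G.deleteEdges F).neighborSet v).ncard = 1)
    (p : (G.deleteEdges F).Walk r v) (hp : p.IsPath) :
    p.length = G.dist r v := by
  have := ascend G hG r F hF p hp ?_
  · rw [SimpleGraph.dist_self, zero_add] at this
    rw [dist_comm, this]
  · intro w h q heq
    rcases step_lemma G hG r F hF h with hd | hu'
    · rw [SimpleGraph.dist_self] at hd; omega
    · exact hu'
end

section
/- Let G be a connected graph with minimum degree at least 2, let r be a vertex of G, and let F be a good edge set with respect to r. If S consists of r together with all endpoints of edges in F, then S is a resolving set of G. -/
open SimpleGraph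

variable {V : Type*}

section Aux

variable [Fintype V]

private lemma dist_lt_card (G : SimpleGraph V) (hG : G.Connected) (u v : V) :
    G.dist u v < Fintype.card V := by
  classical
  obtain ⟨p, hp⟩ := hG.exists_walk_length_eq_dist u v
  calc G.dist u v ≤ p.bypass.length := SimpleGraph.dist_le _
    _ < Fintype.card V := p.bypass_isPath.length_lt

/-- Key downward induction: a vertex `z` above both `x ≠ y` at distance equal to the
level difference leads to a contradiction, given the counting property and
unresolvedness. -/
private lemma down_lemma (G : SimpleGraph V) (hG : G.Connected) (r : V)
    (F : Set (Sym2 V))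
    (hcnt : ∀ u : V, u ≠ r → (brSet G r u ∩ F).ncard = (brSet G r u).ncard - 1)
    (x y : V) (hxy : x ≠ y) (d : ℕ) (hx : G.dist x r = d) (hy : G.dist y r = d)
    (hun : ∀ s ∈ ({r} ∪ endpoints F : Set V), G.dist s x = G.dist s y) :
    ∀ j z, G.dist z r = d + j → G.dist z x = j → G.dist z y = j → False := by
  intro j
  induction j with
  | zero =>
    intro z hz hzx hzy
    have h1 : z = x := hG.dist_eq_zero_iff.mp hzx
    have h2 : z = y := hG.dist_eq_zero_iff.mp hzy
    exact hxy (h1 ▸ h2)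
  | succ n ih =>
    intro z hz hzx hzy
    -- geodesic to x : first step a
    obtain ⟨p, hp⟩ := hG.exists_walk_length_eq_dist z x
    obtain ⟨q, hq⟩ := hG.exists_walk_length_eq_dist z y
    rw [hzx] at hp; rw [hzy] at hq
    cases p with
    | nil => simp at hp
    | cons ha p' =>
    rename_i a
    cases q with
    | nil => simp at hq
    | cons hb q' =>
    rename_i b
    simp only [SimpleGraph.Walk.length_cons, Nat.succ.injEq] at hp hq
    have hza : G.dist z a ≤ 1 := by
      simpa using SimpleGraph.dist_le (SimpleGraph.Walk.cons ha SimpleGraph.Walk.nil)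
    have hzb : G.dist z b ≤ 1 := by
      simpa using SimpleGraph.dist_le (SimpleGraph.Walk.cons hb SimpleGraph.Walk.nil)
    have hax1 : G.dist a x ≤ n := hp ▸ SimpleGraph.dist_le p'
    have hby1 : G.dist b y ≤ n := hq ▸ SimpleGraph.dist_le q'
    have hax : G.dist a x = n := by
      have := hG.dist_triangle (u := z) (v := a) (w := x); omega
    have hby : G.dist b y = n := by
      have := hG.dist_triangle (u := z) (v := b) (w := y); omega
    have haz : G.dist a z ≤ 1 := by rwa [SimpleGraph.dist_comm] at hza
    have hbz : G.dist b z ≤ 1 := by rwa [SimpleGraph.dist_comm] at hzb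
    have har : G.dist a r = d + n := by
      have h1 := hG.dist_triangle (u := z) (v := a) (w := r)
      have h2 := hG.dist_triangle (u := a) (v := x) (w := r)
      omega
    have hbr : G.dist b r = d + n := by
      have h1 := hG.dist_triangle (u := z) (v := b) (w := r)
      have h2 := hG.dist_triangle (u := b) (v := y) (w := r)
      omega
    -- case a = b
    by_cases hab : a = b
    · subst hab
      exact ih a har hax hby
    -- a ≠ b : counting in brSet G r z
    · have hzr : z ≠ r := by
        intro h; subst h
        rw [SimpleGraph.dist_self] at hz; omega
      have haz' : a ≠ z := by
        intro h; subst h; omega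
      have hbz' : b ≠ z := by
        intro h; subst h; omega
      have hmema : s(z, a) ∈ brSet G r z := ⟨a, rfl, ha, by omega⟩
      have hmemb : s(z, b) ∈ brSet G r z := ⟨b, rfl, hb, by omega⟩
      have hne : s(z, a) ≠ s(z, b) := fun h => hab (Sym2.congr_right.mp h)
      have hkey : s(z, a) ∈ F ∨ s(z, b) ∈ F := by
        by_contra hcon
        push_neg at hcon
        obtain ⟨hna, hnb⟩ := hcon
        have hfin : (brSet G r z).Finite := Set.toFinite _
        have hsub : insert s(z, a) (insert s(z, b) (brSet G r z ∩ F)) ⊆ brSet G r z := by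
          intro e he
          rcases he with rfl | he
          · exact hmema
          · rcases he with rfl | he
            · exact hmemb
            · exact he.1
        have h1 : s(z, b) ∉ brSet G r z ∩ F := fun h => hnb h.2
        have h2 : s(z, a) ∉ insert s(z, b) (brSet G r z ∩ F) := by
          intro h
          rcases h with h | h
          · exact hne h
          · exact hna h.2
        have hfin2 : (brSet G r z ∩ F).Finite := hfin.inter_of_left _
        have hcard : (insert s(z, a) (insert s(z, b) (brSet G r z ∩ F))).ncard
            = (brSet G r z ∩ F).ncard + 2 := by
          rw [Set.ncard_insert_of_notMem h2 (hfin2.insert _),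
            Set.ncard_insert_of_notMem h1 hfin2]
        have hle := Set.ncard_le_ncard hsub hfin
        have hpos : 1 ≤ (brSet G r z).ncard := (Set.ncard_pos hfin).mpr ⟨_, hmema⟩
        have := hcnt z hzr
        omega
      rcases hkey with hf | hf
      · have haS : a ∈ ({r} ∪ endpoints F : Set V) :=
          Or.inr ⟨s(z, a), hf, Sym2.mem_mk_right z a⟩
        have hay : G.dist a y = n := by rw [← hun a haS]; exact hax
        exact ih a har hax hay
      · have hbS : b ∈ ({r} ∪ endpoints F : Set V) :=
          Or.inr ⟨s(z, b), hf, Sym2.mem_mk_right z b⟩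
        have hbx : G.dist b x = n := by rw [hun b hbS]; exact hby
        exact ih b hbr hbx hby

end Aux

private lemma up_lemma [Fintype V] (G : SimpleGraph V) (hG : G.Connected) (r : V) (F : Set (Sym2 V))
    (hδ : ∀ v : V, 2 ≤ (G.neighborSet v).ncard)
    (hhor : ∀ u v : V, G.Adj u v → G.dist u r = G.dist v r → s(u, v) ∈ F)
    (hcnt : ∀ u : V, u ≠ r → (brSet G r u ∩ F).ncard = (brSet G r u).ncard - 1)
    (x : V) (d : ℕ) (hx : G.dist x r = d) :
    ∀ c v, Fintype.card V - G.dist v r ≤ c → v ∉ ({r} ∪ endpoints F : Set V) →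
      d ≤ G.dist v r → G.dist v x = G.dist v r - d →
      ∃ z ∈ ({r} ∪ endpoints F : Set V), d ≤ G.dist z r ∧ G.dist z x = G.dist z r - d := by
  intro c
  induction c with
  | zero =>
    intro v hc _ _ _
    have := dist_lt_card G hG v r
    omega
  | succ m ih =>
    intro v hc hvS hdv hvx
    have hvr : v ≠ r := fun h => hvS (Or.inl h)
    by_cases hup : ∃ w, G.Adj v w ∧ G.dist w r = G.dist v r + 1
    · obtain ⟨w, hw, hwr⟩ := hup
      have hwv : G.dist w v ≤ 1 := by
        simpa using SimpleGraph.dist_le (SimpleGraph.Walk.cons hw.symm SimpleGraph.Walk.nil)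
      have hwx : G.dist w x = G.dist w r - d := by
        have h1 := hG.dist_triangle (u := w) (v := v) (w := x)
        have h2 := hG.dist_triangle (u := w) (v := x) (w := r)
        omega
      by_cases hwS : w ∈ ({r} ∪ endpoints F : Set V)
      · exact ⟨w, hwS, by omega, hwx⟩
      · exact ih w (by omega) hwS (by omega) hwx
    · exfalso
      push_neg at hup
      -- every neighbor of v is a down-neighbor
      have hdown : ∀ w, G.Adj v w → G.dist v r = G.dist w r + 1 := by
        intro w hw
        have hvw : G.dist v w ≤ 1 := by
          simpa using SimpleGraph.dist_le (SimpleGraph.Walk.cons hw SimpleGraph.Walk.nil)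
        have hwv : G.dist w v ≤ 1 := by
          simpa using SimpleGraph.dist_le (SimpleGraph.Walk.cons hw.symm SimpleGraph.Walk.nil)
        have h1 := hG.dist_triangle (u := v) (v := w) (w := r)
        have h2 := hG.dist_triangle (u := w) (v := v) (w := r)
        have hne1 := hup w hw
        have hne2 : G.dist w r ≠ G.dist v r := by
          intro h
          exact hvS (Or.inr ⟨s(v, w), hhor v w hw h.symm, Sym2.mem_mk_left v w⟩)
        omega
      -- two distinct neighbors
      obtain ⟨w1, w2, hw1, hw2, hw12⟩ :=
        (Set.one_lt_ncard_iff (s := G.neighborSet v) (Set.toFinite _)).mp (by have := hδ v; omega)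
      have hm1 : s(v, w1) ∈ brSet G r v := ⟨w1, rfl, hw1, hdown w1 hw1⟩
      have hm2 : s(v, w2) ∈ brSet G r v := ⟨w2, rfl, hw2, hdown w2 hw2⟩
      have hne : s(v, w1) ≠ s(v, w2) := fun h => hw12 (Sym2.congr_right.mp h)
      have hBF : brSet G r v ∩ F = ∅ := by
        ext e
        simp only [Set.mem_inter_iff, Set.mem_empty_iff_false, iff_false, not_and]
        rintro ⟨w, rfl, _, _⟩ heF
        exact hvS (Or.inr ⟨s(v, w), heF, Sym2.mem_mk_left v w⟩)
      have hcard := hcnt v hvr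
      rw [hBF, Set.ncard_empty] at hcard
      have hsub : ({s(v, w1), s(v, w2)} : Set (Sym2 V)) ⊆ brSet G r v := by
        rintro e (rfl | rfl)
        · exact hm1
        · exact hm2
      have h2 := Set.ncard_le_ncard hsub (Set.toFinite _)
      rw [Set.ncard_pair hne] at h2
      omega

theorem stmt_4 [Fintype V] (G : SimpleGraph V) (hG : G.Connected)
    (hδ : ∀ v : V, 2 ≤ (G.neighborSet v).ncard) (r : V)
    (F : Set (Sym2 V)) (hF : IsGoodEdgeSet G r F) :
    IsResolving G ({r} ∪ endpoints F) := by
  intro x y hxy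
  by_contra hcon
  push_neg at hcon
  obtain ⟨_, hhor, hcnt⟩ := hF
  have hxS : x ∉ ({r} ∪ endpoints F : Set V) := by
    intro h
    have h0 := hcon x h
    rw [SimpleGraph.dist_self] at h0
    exact hxy (hG.dist_eq_zero_iff.mp h0.symm)
  set d := G.dist x r with hd
  have hy : G.dist y r = d := by
    have := hcon r (Or.inl rfl)
    rw [SimpleGraph.dist_comm (u := r) (v := x), SimpleGraph.dist_comm (u := r) (v := y)] at this
    omega
  obtain ⟨z, hzS, hdz, hzx⟩ := up_lemma G hG r F hδ hhor hcnt x d rfl (Fintype.card V) x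
    (Nat.sub_le _ _) hxS le_rfl (by rw [SimpleGraph.dist_self]; omega)
  have hzy : G.dist z y = G.dist z r - d := by rw [← hcon z hzS]; exact hzx
  exact down_lemma G hG r F hcnt x y hxy d rfl hy hcon (G.dist z r - d) z (by omega) hzx hzy
end

section
/- Let G be a connected graph with minimum degree at least 2, let r be a vertex, and let F be a good edge set with respect to r. Then the set S consisting of r and all endpoints of edges of F is a mixed resolving set of G: for all distinct x, y ∈ V(G) ∪ E(G) there exists s ∈ S with dist(s,x) ≠ dist(s,y). -/
open SimpleGraph

variable {V : Type*}

section helpers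

variable {G : SimpleGraph V} {r : V} {F : Set (Sym2 V)}

lemma hdist0 (hG : G.Connected) {a b : V} (h : G.dist a b = 0) : a = b :=
  (hG.dist_eq_zero_iff).mp h

lemma dadj (hG : G.Connected) {a b : V} (h : G.Adj a b) (c : V) :
    G.dist c a ≤ G.dist c b + 1 := by
  have h1 : G.dist c a ≤ G.dist c b + G.dist b a := hG.dist_triangle
  have h2 : G.dist b a ≤ (Walk.cons h.symm Walk.nil).length := SimpleGraph.dist_le _
  simp only [Walk.length_cons, Walk.length_nil] at h2
  omega

lemma dadj' (hG : G.Connected) {a b : V} (h : G.Adj a b) (c : V) :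
    G.dist a c ≤ G.dist b c + 1 := by
  rw [SimpleGraph.dist_comm (u := a) (v := c), SimpleGraph.dist_comm (u := b) (v := c)]
  exact dadj hG h c

lemma exists_step (hG : G.Connected) {t v : V} {m : ℕ} (h : G.dist t v = m + 1) :
    ∃ x, G.Adj t x ∧ G.dist x v = m := by
  obtain ⟨p, hp⟩ := hG.exists_walk_length_eq_dist t v
  rw [h] at hp
  cases p with
  | nil => simp at hp
  | @cons _ x _ ha q =>
    refine ⟨x, ha, le_antisymm ?_ ?_⟩
    · have h1 := SimpleGraph.dist_le q
      simp only [Walk.length_cons] at hp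
      omega
    · have h1 : G.dist t v ≤ G.dist t x + G.dist x v := hG.dist_triangle
      have h2 : G.dist t x ≤ (Walk.cons ha Walk.nil).length := SimpleGraph.dist_le _
      simp only [Walk.length_cons, Walk.length_nil] at h2
      omega

lemma dist_lt_card_s6 [Fintype V] (hG : G.Connected) (a b : V) :
    G.dist a b < Fintype.card V := by
  classical
  obtain ⟨p, hp⟩ := hG.exists_walk_length_eq_dist a b
  have h2 := p.bypass_isPath.length_lt
  have h3 : G.dist a b ≤ p.bypass.length := SimpleGraph.dist_le _
  omega

end helpers


section structural

variable [Fintype V] {G : SimpleGraph V} {r : V} {F : Set (Sym2 V)}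

lemma hrS : r ∈ ({r} ∪ endpoints F : Set V) := Set.mem_union_left _ rfl

lemma endS {u v : V} (h : s(u, v) ∈ F) : u ∈ ({r} ∪ endpoints F : Set V) :=
  Set.mem_union_right _ ⟨s(u, v), h, Sym2.mem_mk_left u v⟩

lemma endS' {u v : V} (h : s(u, v) ∈ F) : v ∈ ({r} ∪ endpoints F : Set V) :=
  Set.mem_union_right _ ⟨s(u, v), h, Sym2.mem_mk_right u v⟩

lemma one_excluded (hG : G.Connected) (hF : IsGoodEdgeSet G r F) {t : V} (ht : t ≠ r) :
    ∀ e ∈ brSet G r t, ∀ f ∈ brSet G r t, e ∉ F → f ∉ F → e = f := by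
  have hfin : (brSet G r t).Finite := Set.toFinite _
  have hne : (brSet G r t).Nonempty := by
    have h1 : G.dist t r ≠ 0 := fun h => ht (hdist0 hG h)
    obtain ⟨m, hm⟩ : ∃ m, G.dist t r = m + 1 := ⟨G.dist t r - 1, by omega⟩
    obtain ⟨x, hx, hxd⟩ := exists_step hG hm
    exact ⟨s(t, x), x, rfl, hx, by omega⟩
  have hpos : 0 < (brSet G r t).ncard := (Set.ncard_pos hfin).mpr hne
  have hcard := hF.2.2 t ht
  have hdiff : (brSet G r t \ F).ncard = 1 := by
    have hsub : brSet G r t ∩ F ⊆ brSet G r t := Set.inter_subset_left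
    have h2 : (brSet G r t \ (brSet G r t ∩ F)).ncard
        = (brSet G r t).ncard - (brSet G r t ∩ F).ncard := Set.ncard_diff hsub (Set.toFinite _)
    rw [Set.diff_self_inter] at h2
    omega
  obtain ⟨a, ha⟩ := Set.ncard_eq_one.mp hdiff
  intro e he f hf heF hfF
  have h1 : e ∈ ({a} : Set (Sym2 V)) := ha ▸ (⟨he, heF⟩ : e ∈ brSet G r t \ F)
  have h2 : f ∈ ({a} : Set (Sym2 V)) := ha ▸ (⟨hf, hfF⟩ : f ∈ brSet G r t \ F)
  rw [Set.mem_singleton_iff] at h1 h2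
  rw [h1, h2]

lemma up_neighbor (hG : G.Connected) (hδ : ∀ v : V, 2 ≤ (G.neighborSet v).ncard)
    (hF : IsGoodEdgeSet G r F) {u : V} (hu : u ∉ ({r} ∪ endpoints F : Set V)) :
    ∃ w, G.Adj u w ∧ G.dist w r = G.dist u r + 1 := by
  have hur : u ≠ r := fun h => hu (h ▸ hrS)
  have hnotend : ∀ e ∈ F, u ∉ e := fun e he hm => hu (Set.mem_union_right _ ⟨e, he, hm⟩)
  have hBF : brSet G r u ∩ F = ∅ := by
    ext e
    simp only [Set.mem_inter_iff, Set.mem_empty_iff_false, iff_false, not_and]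
    rintro ⟨v, rfl, -, -⟩ heF
    exact hnotend _ heF (Sym2.mem_mk_left _ _)
  have hcard := hF.2.2 u hur
  rw [hBF] at hcard
  simp only [Set.ncard_empty] at hcard
  have hB1 : (brSet G r u).ncard ≤ 1 := by omega
  have htri : ∀ z, G.Adj u z →
      G.dist z r = G.dist u r + 1 ∨ G.dist z r + 1 = G.dist u r := by
    intro z hz
    have h1 : G.dist z r ≤ G.dist u r + 1 := dadj' hG hz.symm r
    have h2 : G.dist u r ≤ G.dist z r + 1 := dadj' hG hz r
    by_cases h3 : G.dist u r = G.dist z r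
    · exact absurd (hF.2.1 u z hz h3) (fun hf => hnotend _ hf (Sym2.mem_mk_left _ _))
    · omega
  obtain ⟨x, hx, y, hy, hxy⟩ := (Set.one_lt_ncard (s := G.neighborSet u) (Set.toFinite _)).mp
    (by have := hδ u; omega)
  rw [SimpleGraph.mem_neighborSet] at hx hy
  rcases htri x hx with h | h
  · exact ⟨x, hx, h⟩
  rcases htri y hy with h2 | h2
  · exact ⟨y, hy, h2⟩
  exfalso
  have hm1 : s(u, x) ∈ brSet G r u := ⟨x, rfl, hx, by omega⟩
  have hm2 : s(u, y) ∈ brSet G r u := ⟨y, rfl, hy, by omega⟩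
  have : 1 < (brSet G r u).ncard := (Set.one_lt_ncard (Set.toFinite _)).mpr
    ⟨_, hm1, _, hm2, fun h => hxy (Sym2.congr_right.mp h)⟩
  omega

lemma lemmaL_aux (hG : G.Connected) (hδ : ∀ v : V, 2 ≤ (G.neighborSet v).ncard)
    (hF : IsGoodEdgeSet G r F) :
    ∀ (k : ℕ) (u : V), Fintype.card V ≤ G.dist u r + k →
    ∃ s ∈ ({r} ∪ endpoints F : Set V), G.dist s r = G.dist s u + G.dist u r := by
  intro k
  induction k with
  | zero =>
    intro u h
    have := dist_lt_card_s6 hG u r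
    omega
  | succ k ih =>
    intro u h
    by_cases hu : u ∈ ({r} ∪ endpoints F : Set V)
    · exact ⟨u, hu, by simp⟩
    · obtain ⟨w, hw, hwd⟩ := up_neighbor hG hδ hF hu
      obtain ⟨s, hs, hsd⟩ := ih w (by omega)
      refine ⟨s, hs, ?_⟩
      have h1 : G.dist s r ≤ G.dist s u + G.dist u r := hG.dist_triangle
      have h2 : G.dist s u ≤ G.dist s w + 1 := dadj hG hw s
      omega

lemma lemmaL (hG : G.Connected) (hδ : ∀ v : V, 2 ≤ (G.neighborSet v).ncard)
    (hF : IsGoodEdgeSet G r F) (u : V) :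
    ∃ s ∈ ({r} ∪ endpoints F : Set V), G.dist s r = G.dist s u + G.dist u r :=
  lemmaL_aux hG hδ hF (Fintype.card V) u (by omega)

lemma claimF (hG : G.Connected) (hF : IsGoodEdgeSet G r F) :
    ∀ (m : ℕ) (t b d : V), b ≠ d → G.dist b r = G.dist d r →
    G.dist t b = m → G.dist t d = m → G.dist t r = m + G.dist b r →
    ∃ s ∈ ({r} ∪ endpoints F : Set V),
      (G.dist s r = G.dist s b + G.dist b r ∧ G.dist s b < G.dist s d) ∨
      (G.dist s r = G.dist s d + G.dist d r ∧ G.dist s d < G.dist s b) := by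
  intro m
  induction m with
  | zero =>
    intro t b d hbd _ h1 h2 _
    exact absurd ((hdist0 hG h1).symm.trans (hdist0 hG h2)) hbd
  | succ m ih =>
    intro t b d hbd hlvl h1 h2 h3
    have htr : t ≠ r := by
      intro h; subst h
      rw [SimpleGraph.dist_self] at h3; omega
    by_cases hz : ∃ z, G.Adj t z ∧ G.dist z r + 1 = G.dist t r ∧
        G.dist z b = m ∧ G.dist z d = m
    · obtain ⟨z, hz1, hz2, hz3, hz4⟩ := hz
      exact ih z b d hbd hlvl hz3 hz4 (by omega)
    · obtain ⟨x, hx, hxd⟩ := exists_step hG h2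
      obtain ⟨y, hy, hyb⟩ := exists_step hG h1
      have hxr : G.dist x r = m + G.dist b r := by
        have l1 : G.dist x r ≤ G.dist x d + G.dist d r := hG.dist_triangle
        have l2 : G.dist t r ≤ G.dist x r + 1 := dadj' hG hx r
        omega
      have hyr : G.dist y r = m + G.dist b r := by
        have l1 : G.dist y r ≤ G.dist y b + G.dist b r := hG.dist_triangle
        have l2 : G.dist t r ≤ G.dist y r + 1 := dadj' hG hy r
        omega
      have hxb : m ≤ G.dist x b := by
        have := hG.dist_triangle (u := x) (v := b) (w := r)
        omega
      have hyd : m ≤ G.dist y d := by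
        have := hG.dist_triangle (u := y) (v := d) (w := r)
        omega
      have hxb' : G.dist x b ≠ m := fun h => hz ⟨x, hx, by omega, h, hxd⟩
      have hyd' : G.dist y d ≠ m := fun h => hz ⟨y, hy, by omega, hyb, h⟩
      have hxy : x ≠ y := fun h => hxb' (h ▸ hyb)
      have hex : s(t, x) ∈ brSet G r t := ⟨x, rfl, hx, by omega⟩
      have hey : s(t, y) ∈ brSet G r t := ⟨y, rfl, hy, by omega⟩
      by_cases hxF : s(t, x) ∈ F
      · exact ⟨x, endS' hxF, Or.inr ⟨by omega, by omega⟩⟩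
      · have hyF : s(t, y) ∈ F := by
          by_contra hyF
          exact hxy (Sym2.congr_right.mp (one_excluded hG hF htr _ hex _ hey hxF hyF))
        exact ⟨y, endS' hyF, Or.inl ⟨by omega, by omega⟩⟩

end structural


section mains

variable [Fintype V] {G : SimpleGraph V} {r : V} {F : Set (Sym2 V)}

lemma mainV (hG : G.Connected) (hδ : ∀ v : V, 2 ≤ (G.neighborSet v).ncard)
    (hF : IsGoodEdgeSet G r F) {u v : V} (huv : u ≠ v) :
    ∃ s ∈ ({r} ∪ endpoints F : Set V), G.dist s u ≠ G.dist s v := by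
  by_cases hl : G.dist u r = G.dist v r
  · obtain ⟨s, hs, hsd⟩ := lemmaL hG hδ hF u
    by_cases he : G.dist s u = G.dist s v
    · obtain ⟨s', hs', h⟩ := claimF hG hF (G.dist s u) s u v huv hl rfl he.symm hsd
      rcases h with ⟨-, h⟩ | ⟨-, h⟩
      · exact ⟨s', hs', h.ne⟩
      · exact ⟨s', hs', h.ne'⟩
    · exact ⟨s, hs, he⟩
  · refine ⟨r, hrS, ?_⟩
    rw [SimpleGraph.dist_comm (u := r) (v := u), SimpleGraph.dist_comm (u := r) (v := v)]
    exact hl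

lemma mainVE_aux (hG : G.Connected) (hδ : ∀ v : V, 2 ≤ (G.neighborSet v).ncard)
    (hF : IsGoodEdgeSet G r F) {u v : V} (w : V) (huv : G.Adj u v)
    (hle : G.dist v r ≤ G.dist u r) :
    ∃ s ∈ ({r} ∪ endpoints F : Set V),
      G.dist s w ≠ min (G.dist s u) (G.dist s v) := by
  have hdiff : G.dist u r ≤ G.dist v r + 1 := dadj' hG huv r
  by_cases hw : G.dist w r = G.dist v r
  · by_cases hor : G.dist u r = G.dist v r
    · -- horizontal edge, in F
      have hf : s(u, v) ∈ F := hF.2.1 u v huv hor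
      by_cases hwu : w = u
      · refine ⟨v, endS' hf, ?_⟩
        have h1 : G.dist v w ≠ 0 := fun h => huv.ne' ((hdist0 hG h).trans hwu)
        have h2 : min (G.dist v u) (G.dist v v) = 0 := by
          rw [SimpleGraph.dist_self]; omega
        omega
      · refine ⟨u, endS hf, ?_⟩
        have h1 : G.dist u w ≠ 0 := fun h => hwu (hdist0 hG h).symm
        have h2 : min (G.dist u u) (G.dist u v) = 0 := by
          rw [SimpleGraph.dist_self]; omega
        omega
    · have hor' : G.dist u r = G.dist v r + 1 := by omega
      obtain ⟨s, hs, hsd⟩ := lemmaL hG hδ hF u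
      have h1 : G.dist s u + 1 ≤ G.dist s v := by
        have := hG.dist_triangle (u := s) (v := v) (w := r)
        omega
      have h2 : G.dist s u + 1 ≤ G.dist s w := by
        have := hG.dist_triangle (u := s) (v := w) (w := r)
        omega
      refine ⟨s, hs, ?_⟩
      have h3 : min (G.dist s u) (G.dist s v) = G.dist s u := min_eq_left (by omega)
      omega
  · refine ⟨r, hrS, ?_⟩
    rw [SimpleGraph.dist_comm (u := r) (v := w), SimpleGraph.dist_comm (u := r) (v := u),
      SimpleGraph.dist_comm (u := r) (v := v)]
    have h3 : min (G.dist u r) (G.dist v r) = G.dist v r := min_eq_right hle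
    omega

lemma mainVE (hG : G.Connected) (hδ : ∀ v : V, 2 ≤ (G.neighborSet v).ncard)
    (hF : IsGoodEdgeSet G r F) {u v : V} (w : V) (huv : G.Adj u v) :
    ∃ s ∈ ({r} ∪ endpoints F : Set V),
      G.dist s w ≠ min (G.dist s u) (G.dist s v) := by
  rcases le_total (G.dist v r) (G.dist u r) with h | h
  · exact mainVE_aux hG hδ hF w huv h
  · obtain ⟨s, hs, hd⟩ := mainVE_aux hG hδ hF w huv.symm h
    exact ⟨s, hs, by rwa [min_comm] at hd⟩

lemma mainEE_mixed (hG : G.Connected) (hδ : ∀ v : V, 2 ≤ (G.neighborSet v).ncard)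
    (hF : IsGoodEdgeSet G r F) {a b c d : V}
    (hb : G.dist b r = G.dist a r) (hc : G.dist c r = G.dist a r)
    (hd : G.dist d r = G.dist a r + 1) :
    ∃ s ∈ ({r} ∪ endpoints F : Set V),
      min (G.dist s a) (G.dist s b) ≠ min (G.dist s c) (G.dist s d) := by
  obtain ⟨s, hs, hsd⟩ := lemmaL hG hδ hF d
  have h1 : G.dist s d + 1 ≤ G.dist s c := by
    have := hG.dist_triangle (u := s) (v := c) (w := r); omega
  have h2 : G.dist s d + 1 ≤ G.dist s a := by
    have := hG.dist_triangle (u := s) (v := a) (w := r); omega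
  have h3 : G.dist s d + 1 ≤ G.dist s b := by
    have := hG.dist_triangle (u := s) (v := b) (w := r); omega
  refine ⟨s, hs, ?_⟩
  have h4 : min (G.dist s c) (G.dist s d) = G.dist s d := min_eq_right (by omega)
  have h5 : G.dist s d + 1 ≤ min (G.dist s a) (G.dist s b) := le_min h2 h3
  omega

lemma mainEE_shared (hG : G.Connected) (hF : IsGoodEdgeSet G r F) {a b c : V}
    (hab : G.Adj a b) (hcb : G.Adj c b) (hac : a ≠ c)
    (ha : G.dist b r = G.dist a r + 1) (hc : G.dist b r = G.dist c r + 1) :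
    ∃ s ∈ ({r} ∪ endpoints F : Set V),
      min (G.dist s a) (G.dist s b) ≠ min (G.dist s c) (G.dist s b) := by
  have hbr : b ≠ r := by
    intro h; subst h; rw [SimpleGraph.dist_self] at ha; omega
  have he1 : s(b, a) ∈ brSet G r b := ⟨a, rfl, hab.symm, ha⟩
  have he2 : s(b, c) ∈ brSet G r b := ⟨c, rfl, hcb.symm, hc⟩
  have key : ∀ x y : V, G.Adj x b → x ≠ y → s(b, x) ∈ F →
      min (G.dist x x) (G.dist x b) ≠ min (G.dist x y) (G.dist x b) := by
    intro x y hxb hxy hxF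
    have p1 : G.dist x y ≠ 0 := fun h => hxy (hdist0 hG h)
    have p2 : G.dist x b ≠ 0 := fun h => hxb.ne (hdist0 hG h)
    rw [SimpleGraph.dist_self]
    have : min (G.dist x y) (G.dist x b) ≠ 0 := by
      rw [Nat.min_def]; split <;> omega
    omega
  by_cases haF : s(b, a) ∈ F
  · exact ⟨a, endS' haF, key a c hab hac haF⟩
  · have hcF : s(b, c) ∈ F := by
      by_contra hcF
      exact hac (Sym2.congr_right.mp (one_excluded hG hF hbr _ he1 _ he2 haF hcF))
    exact ⟨c, endS' hcF, fun h => key c a hcb (Ne.symm hac) hcF h.symm⟩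

lemma mainEE_ord (hG : G.Connected) (hδ : ∀ v : V, 2 ≤ (G.neighborSet v).ncard)
    (hF : IsGoodEdgeSet G r F) {a b c d : V} (hab : G.Adj a b) (hcd : G.Adj c d)
    (h1 : G.dist a r ≤ G.dist b r) (h2 : G.dist c r ≤ G.dist d r)
    (hne : s(a, b) ≠ s(c, d)) :
    ∃ s ∈ ({r} ∪ endpoints F : Set V),
      min (G.dist s a) (G.dist s b) ≠ min (G.dist s c) (G.dist s d) := by
  have hb2 : G.dist b r ≤ G.dist a r + 1 := dadj' hG hab.symm r
  have hd2 : G.dist d r ≤ G.dist c r + 1 := dadj' hG hcd.symm r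
  by_cases hlev : G.dist a r = G.dist c r
  case neg =>
    refine ⟨r, hrS, ?_⟩
    rw [SimpleGraph.dist_comm (u := r) (v := a), SimpleGraph.dist_comm (u := r) (v := b),
      SimpleGraph.dist_comm (u := r) (v := c), SimpleGraph.dist_comm (u := r) (v := d)]
    have q1 : min (G.dist a r) (G.dist b r) = G.dist a r := min_eq_left h1
    have q2 : min (G.dist c r) (G.dist d r) = G.dist c r := min_eq_left h2
    omega
  case pos =>
  by_cases hbh : G.dist b r = G.dist a r
  · by_cases hdh : G.dist d r = G.dist c r
    · -- both horizontal, both in F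
      have hf1 : s(a, b) ∈ F := hF.2.1 a b hab hbh.symm
      have hw : ∃ w, (w = a ∨ w = b) ∧ w ≠ c ∧ w ≠ d := by
        by_cases q1 : a = c
        · subst q1
          refine ⟨b, Or.inr rfl, fun h => hab.ne' h, fun h => hne (by rw [h])⟩
        · by_cases q2 : a = d
          · subst q2
            refine ⟨b, Or.inr rfl, fun h => hne (by rw [h, Sym2.eq_swap]), fun h => hab.ne' h⟩
          · exact ⟨a, Or.inl rfl, q1, q2⟩
      obtain ⟨w, hwab, hwc, hwd⟩ := hw
      have hwS : w ∈ ({r} ∪ endpoints F : Set V) := by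
        rcases hwab with rfl | rfl
        · exact endS hf1
        · exact endS' hf1
      refine ⟨w, hwS, ?_⟩
      have p1 : min (G.dist w a) (G.dist w b) = 0 := by
        rcases hwab with rfl | rfl
        · rw [SimpleGraph.dist_self]; omega
        · rw [SimpleGraph.dist_self]; omega
      have p2 : G.dist w c ≠ 0 := fun h => hwc (hdist0 hG h)
      have p3 : G.dist w d ≠ 0 := fun h => hwd (hdist0 hG h)
      have p4 : min (G.dist w c) (G.dist w d) ≠ 0 := by
        rw [Nat.min_def]; split <;> omega
      omega
    · -- e horizontal, f not
      exact mainEE_mixed hG hδ hF hbh (hlev.symm) (by omega)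
  · by_cases hdh : G.dist d r = G.dist c r
    · -- f horizontal, e not
      obtain ⟨s, hs, h⟩ := mainEE_mixed hG hδ hF (a := c) (b := d) (c := a) (d := b)
        hdh hlev (by omega)
      exact ⟨s, hs, h.symm⟩
    · -- both non-horizontal, uppers b and d
      have hbu : G.dist b r = G.dist a r + 1 := by omega
      have hdu : G.dist d r = G.dist c r + 1 := by omega
      by_cases hbd : b = d
      · subst hbd
        have hac : a ≠ c := by
          intro h; subst h; exact hne rfl
        exact mainEE_shared hG hF hab hcd hac hbu (by omega)
      · have hlvl : G.dist b r = G.dist d r := by omega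
        have hmain : ∃ s ∈ ({r} ∪ endpoints F : Set V),
            (G.dist s r = G.dist s b + G.dist b r ∧ G.dist s b < G.dist s d) ∨
            (G.dist s r = G.dist s d + G.dist d r ∧ G.dist s d < G.dist s b) := by
          obtain ⟨s0, hs0, hs0d⟩ := lemmaL hG hδ hF b
          by_cases heq : G.dist s0 d = G.dist s0 b
          · exact claimF hG hF (G.dist s0 b) s0 b d hbd hlvl rfl heq hs0d
          · have : G.dist s0 b ≤ G.dist s0 d := by
              have := hG.dist_triangle (u := s0) (v := d) (w := r); omega
            exact ⟨s0, hs0, Or.inl ⟨hs0d, by omega⟩⟩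
        obtain ⟨s, hs, h⟩ := hmain
        rcases h with ⟨hup, hlt⟩ | ⟨hup, hlt⟩
        · refine ⟨s, hs, ?_⟩
          have p1 : G.dist s b + 1 ≤ G.dist s a := by
            have := hG.dist_triangle (u := s) (v := a) (w := r); omega
          have p2 : G.dist s b + 1 ≤ G.dist s c := by
            have := hG.dist_triangle (u := s) (v := c) (w := r); omega
          have q1 : min (G.dist s a) (G.dist s b) = G.dist s b := min_eq_right (by omega)
          have q2 : G.dist s b + 1 ≤ min (G.dist s c) (G.dist s d) := le_min p2 (by omega)
          omega
        · refine ⟨s, hs, ?_⟩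
          have p1 : G.dist s d + 1 ≤ G.dist s c := by
            have := hG.dist_triangle (u := s) (v := c) (w := r); omega
          have p2 : G.dist s d + 1 ≤ G.dist s a := by
            have := hG.dist_triangle (u := s) (v := a) (w := r); omega
          have q1 : min (G.dist s c) (G.dist s d) = G.dist s d := min_eq_right (by omega)
          have q2 : G.dist s d + 1 ≤ min (G.dist s a) (G.dist s b) := le_min p2 (by omega)
          omega

lemma mainEE (hG : G.Connected) (hδ : ∀ v : V, 2 ≤ (G.neighborSet v).ncard)
    (hF : IsGoodEdgeSet G r F) {a b c d : V} (hab : G.Adj a b) (hcd : G.Adj c d)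
    (hne : s(a, b) ≠ s(c, d)) :
    ∃ s ∈ ({r} ∪ endpoints F : Set V),
      min (G.dist s a) (G.dist s b) ≠ min (G.dist s c) (G.dist s d) := by
  rcases le_total (G.dist a r) (G.dist b r) with h1 | h1 <;>
    rcases le_total (G.dist c r) (G.dist d r) with h2 | h2
  · exact mainEE_ord hG hδ hF hab hcd h1 h2 hne
  · obtain ⟨s, hs, h⟩ := mainEE_ord hG hδ hF hab hcd.symm h1 h2
      (fun h => hne (h.trans Sym2.eq_swap))
    exact ⟨s, hs, by rwa [min_comm (G.dist s d)] at h⟩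
  · obtain ⟨s, hs, h⟩ := mainEE_ord hG hδ hF hab.symm hcd h1 h2
      (fun h => hne ((Sym2.eq_swap).trans h))
    exact ⟨s, hs, by rwa [min_comm (G.dist s b)] at h⟩
  · obtain ⟨s, hs, h⟩ := mainEE_ord hG hδ hF hab.symm hcd.symm h1 h2
      (fun h => hne ((Sym2.eq_swap).trans (h.trans Sym2.eq_swap)))
    exact ⟨s, hs, by rwa [min_comm (G.dist s b), min_comm (G.dist s d)] at h⟩

end mains


theorem stmt_6 [Fintype V] (G : SimpleGraph V) (hG : G.Connected)
    (hδ : ∀ v : V, 2 ≤ (G.neighborSet v).ncard) (r : V)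
    (F : Set (Sym2 V)) (hF : IsGoodEdgeSet G r F) :
    IsMixedResolving G ({r} ∪ endpoints F) := by
  intro x y hx hy hxy
  cases x with
  | inl u =>
    cases y with
    | inl v =>
      obtain ⟨s, hs, h⟩ := mainV hG hδ hF (fun h : u = v => hxy (by rw [h]))
      exact ⟨s, hs, by simpa [mixedDist] using h⟩
    | inr e =>
      revert hy hxy
      induction e using Sym2.ind with
      | _ a b =>
        intro hy hxy
        have hadj : G.Adj a b := by
          simpa [IsMixedElem, SimpleGraph.mem_edgeSet] using hy
        obtain ⟨s, hs, h⟩ := mainVE hG hδ hF u hadj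
        exact ⟨s, hs, by simpa [mixedDist, edgeDist] using h⟩
  | inr e =>
    cases y with
    | inl w =>
      revert hx hxy
      induction e using Sym2.ind with
      | _ a b =>
        intro hx hxy
        have hadj : G.Adj a b := by
          simpa [IsMixedElem, SimpleGraph.mem_edgeSet] using hx
        obtain ⟨s, hs, h⟩ := mainVE hG hδ hF w hadj
        exact ⟨s, hs, by simpa [mixedDist, edgeDist] using h.symm⟩
    | inr f =>
      revert hx hy hxy
      induction e using Sym2.ind with
      | _ a b =>
        induction f using Sym2.ind with
        | _ c d =>
          intro hx hy hxy
          have hab : G.Adj a b := by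
            simpa [IsMixedElem, SimpleGraph.mem_edgeSet] using hx
          have hcd : G.Adj c d := by
            simpa [IsMixedElem, SimpleGraph.mem_edgeSet] using hy
          have hne : s(a, b) ≠ s(c, d) := fun h => hxy (by rw [h])
          obtain ⟨s, hs, h⟩ := mainEE hG hδ hF hab hcd hne
          exact ⟨s, hs, by simpa [mixedDist, edgeDist] using h⟩
end

section
/- Let G be a connected graph with a cut-vertex v, and let R ⊆ V(G) be such that at least two connected components of G − v contain elements of R. If x, y ∈ V(G) satisfy dist(v,x) ≠ dist(v,y), then there exists s ∈ R with s ≠ v and dist(s,x) ≠ dist(s,y). -/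
open SimpleGraph

variable {V : Type*}

theorem stmt_7 (G : SimpleGraph V) (hG : G.Connected) (v : V) (hv : IsCutVertex G v)
    (R : Set V)
    (hR : ∃ a b : ↥{u : V | u ≠ v}, (a : V) ∈ R ∧ (b : V) ∈ R ∧
      (G.induce {u : V | u ≠ v}).connectedComponentMk a ≠
        (G.induce {u : V | u ≠ v}).connectedComponentMk b)
    (x y : V) (hxy : G.dist v x ≠ G.dist v y) :
    ∃ s ∈ R, s ≠ v ∧ G.dist s x ≠ G.dist s y := by
  classical
  -- Key lemma: if s,t ≠ v are in different components of G - v, then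
  -- dist s t ≥ dist s v + dist v t.
  have reach_avoid : ∀ (s t : V) (p : G.Walk s t) (hs : s ≠ v) (ht : t ≠ v),
      v ∉ p.support → (G.induce {u : V | u ≠ v}).Reachable ⟨s, hs⟩ ⟨t, ht⟩ := by
    intro s t p
    induction p with
    | nil => intro _ _ _; rfl
    | @cons a c d hac q ih =>
      intro hs ht hsup
      rw [SimpleGraph.Walk.support_cons] at hsup
      simp only [List.mem_cons, not_or] at hsup
      have hc : c ≠ v := by
        intro h; exact hsup.2 (h ▸ q.start_mem_support)
      have h1 : (G.induce {u : V | u ≠ v}).Adj ⟨a, hs⟩ ⟨c, hc⟩ := hac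
      exact (SimpleGraph.Adj.reachable h1).trans (ih hc ht hsup.2)
  have key : ∀ (s t : V) (hs : s ≠ v) (ht : t ≠ v),
      (G.induce {u : V | u ≠ v}).connectedComponentMk ⟨s, hs⟩ ≠
        (G.induce {u : V | u ≠ v}).connectedComponentMk ⟨t, ht⟩ →
      G.dist s v + G.dist v t ≤ G.dist s t := by
    intro s t hs ht hcomp
    obtain ⟨p, hp⟩ := (hG s t).exists_walk_length_eq_dist
    have hvmem : v ∈ p.support := by
      by_contra hvn
      exact hcomp (SimpleGraph.ConnectedComponent.sound (reach_avoid s t p hs ht hvn))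
    have hsplit := p.take_spec hvmem
    calc G.dist s v + G.dist v t
        ≤ (p.takeUntil v hvmem).length + (p.dropUntil v hvmem).length :=
          Nat.add_le_add (SimpleGraph.dist_le _) (SimpleGraph.dist_le _)
      _ = p.length := by rw [← SimpleGraph.Walk.length_append, hsplit]
      _ = G.dist s t := hp
  obtain ⟨a, b, haR, hbR, hab⟩ := hR
  rcases lt_or_gt_of_ne hxy with hlt | hlt
  · -- dist v x < dist v y
    have hy : y ≠ v := by
      rintro rfl; rw [SimpleGraph.dist_self] at hlt; omega
    -- pick s ∈ {a,b} in a component different from y's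
    have : ∃ s : ↥{u : V | u ≠ v}, (s : V) ∈ R ∧
        (G.induce {u : V | u ≠ v}).connectedComponentMk s ≠
          (G.induce {u : V | u ≠ v}).connectedComponentMk ⟨y, hy⟩ := by
      by_cases hca : (G.induce {u : V | u ≠ v}).connectedComponentMk a =
          (G.induce {u : V | u ≠ v}).connectedComponentMk ⟨y, hy⟩
      · exact ⟨b, hbR, fun h => hab (hca.trans h.symm)⟩
      · exact ⟨a, haR, hca⟩
    obtain ⟨⟨s, hsv⟩, hsR, hscomp⟩ := this
    refine ⟨s, hsR, hsv, ?_⟩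
    have h1 : G.dist s v + G.dist v y ≤ G.dist s y := key s y hsv hy hscomp
    have h2 : G.dist s x ≤ G.dist s v + G.dist v x := hG.dist_triangle
    omega
  · -- dist v y < dist v x : symmetric
    have hx : x ≠ v := by
      rintro rfl; rw [SimpleGraph.dist_self] at hlt; omega
    have : ∃ s : ↥{u : V | u ≠ v}, (s : V) ∈ R ∧
        (G.induce {u : V | u ≠ v}).connectedComponentMk s ≠
          (G.induce {u : V | u ≠ v}).connectedComponentMk ⟨x, hx⟩ := by
      by_cases hca : (G.induce {u : V | u ≠ v}).connectedComponentMk a =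
          (G.induce {u : V | u ≠ v}).connectedComponentMk ⟨x, hx⟩
      · exact ⟨b, hbR, fun h => hab (hca.trans h.symm)⟩
      · exact ⟨a, haR, hca⟩
    obtain ⟨⟨s, hsv⟩, hsR, hscomp⟩ := this
    refine ⟨s, hsR, hsv, ?_⟩
    have h1 : G.dist s v + G.dist v x ≤ G.dist s x := key s x hsv hx hscomp
    have h2 : G.dist s y ≤ G.dist s v + G.dist v y := hG.dist_triangle
    omega
end

section
/- If R ⊆ V(G) is a mixed resolving set of a connected graph G and v is a cut-vertex of G, then every connected component of G − v contains at least one element of R. -/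
open SimpleGraph

variable {V : Type*}

private lemma lift_walk {G : SimpleGraph V} {v : V} :
    ∀ {a b : V} (p : G.Walk a b) (h : ∀ x ∈ p.support, x ≠ v),
      (G.induce {u : V | u ≠ v}).Reachable
        ⟨a, h a p.start_mem_support⟩ ⟨b, h b p.end_mem_support⟩
  | a, _, SimpleGraph.Walk.nil, h => Reachable.refl _
  | a, b, SimpleGraph.Walk.cons hadj q, h => by
      have hq : ∀ x ∈ q.support, x ≠ v := fun x hx => h x (by simp [hx])
      have h1 : (G.induce {u : V | u ≠ v}).Adj ⟨a, h a (by simp)⟩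
          ⟨_, hq _ q.start_mem_support⟩ := hadj
      exact h1.reachable.trans (lift_walk q hq)

private lemma find_nbr {G : SimpleGraph V} {v : V} :
    ∀ {w : V} (p : G.Walk w v) (hw : w ≠ v),
      ∃ (u : V) (hu : u ≠ v), G.Adj u v ∧
        (G.induce {x : V | x ≠ v}).Reachable ⟨w, hw⟩ ⟨u, hu⟩
  | w, SimpleGraph.Walk.nil, hw => absurd rfl hw
  | w, @SimpleGraph.Walk.cons _ _ _ x _ hadj q, hw => by
      by_cases hx : x = v
      · subst hx
        exact ⟨w, hw, hadj, Reachable.refl _⟩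
      · obtain ⟨u, hu, huv, hr⟩ := find_nbr q hx
        have h1 : (G.induce {x : V | x ≠ v}).Adj ⟨w, hw⟩ ⟨x, hx⟩ := hadj
        exact ⟨u, hu, huv, h1.reachable.trans hr⟩

theorem stmt_8 (G : SimpleGraph V) (hG : G.Connected) (v : V) (hv : IsCutVertex G v)
    (R : Set V) (hR : IsMixedResolving G R) :
    ∀ C : (G.induce {u : V | u ≠ v}).ConnectedComponent,
      ∃ a : ↥{u : V | u ≠ v},
        (G.induce {u : V | u ≠ v}).connectedComponentMk a = C ∧ (a : V) ∈ R := by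
  classical
  intro C
  by_contra hC
  push_neg at hC
  obtain ⟨w, hw⟩ := C.exists_rep
  -- find a neighbor u of v in component C
  obtain ⟨p⟩ := hG.preconnected w.1 v
  obtain ⟨u, hu, huv, hr⟩ := find_nbr p w.2
  have hcu : (G.induce {x : V | x ≠ v}).connectedComponentMk ⟨u, hu⟩ = C := by
    rw [← hw]
    exact (ConnectedComponent.sound hr).symm
  -- apply mixed resolving to vertex v vs edge s(u,v)
  obtain ⟨s, hsR, hsd⟩ := hR (Sum.inl v) (Sum.inr s(u, v)) trivial huv (by simp)
  apply hsd
  simp only [mixedDist, edgeDist, Sym2.lift_mk]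
  by_cases hsv : s = v
  · subst hsv; simp [dist_self, dist_comm]
  · -- s ∈ R, so s is not in C
    have hsC : (G.induce {x : V | x ≠ v}).connectedComponentMk ⟨s, hsv⟩ ≠ C := by
      intro h
      exact hC ⟨s, hsv⟩ h hsR
    -- every s-u walk passes through v
    have key : G.dist s v + 1 ≤ G.dist s u := by
      obtain ⟨q, hq⟩ := hG.exists_walk_length_eq_dist s u
      have hvq : v ∈ q.support := by
        by_contra hvq
        have hall : ∀ x ∈ q.support, x ≠ v := fun x hx hxv => hvq (hxv ▸ hx)
        have := lift_walk q hall
        exact hsC (hcu ▸ ConnectedComponent.sound this)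
      have h1 : G.dist s v ≤ (q.takeUntil v hvq).length := dist_le _
      have h2 : 1 ≤ (q.dropUntil v hvq).length := by
        rcases Nat.eq_zero_or_pos (q.dropUntil v hvq).length with h | h
        · exact absurd ((q.dropUntil v hvq).eq_of_length_eq_zero h).symm hu
        · exact h
      have h3 : (q.takeUntil v hvq).length + (q.dropUntil v hvq).length = q.length := by
        rw [← Walk.length_append, q.take_spec hvq]
      omega
    have : min (G.dist s u) (G.dist s v) = G.dist s v := min_eq_right (by omega)
    rw [this]
end

section
/- Let G be a connected graph with minimum degree at least 2. Then the edge metric dimension of G is at most 2·c(G) + 1; if moreover G contains a cut-vertex, then the edge metric dimension of G is at most 2·c(G). -/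
open SimpleGraph

variable {V : Type*}

lemma exists_down (G : SimpleGraph V) (hG : G.Connected) (r v : V) (hv : v ≠ r) :
    ∃ w, G.Adj v w ∧ G.dist v r = G.dist w r + 1 := by
  have hd : G.dist v r ≠ 0 := by
    rw [SimpleGraph.dist_ne_zero_iff_ne_and_reachable]
    exact ⟨hv, hG.preconnected v r⟩
  obtain ⟨p, hp⟩ := (hG.preconnected v r).exists_walk_length_eq_dist
  cases p with
  | nil => simp at hp; simp [SimpleGraph.dist_self] at hd
  | @cons _ w _ h q =>
    refine ⟨w, h, ?_⟩
    have h1 : G.dist w r ≤ q.length := SimpleGraph.dist_le q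
    have h2 : G.dist v r ≤ G.dist v w + G.dist w r :=
      hG.dist_triangle
    have h3 : G.dist v w ≤ 1 := by
      rw [← SimpleGraph.dist_eq_one_iff_adj.mpr h]
    simp only [SimpleGraph.Walk.length_cons] at hp
    omega

lemma dist_lip (G : SimpleGraph V) (hG : G.Connected) {a b : V} (r : V) (h : G.Adj a b) :
    G.dist a r ≤ G.dist b r + 1 := by
  have h2 : G.dist a r ≤ G.dist a b + G.dist b r := hG.dist_triangle
  have h3 : G.dist a b = 1 := SimpleGraph.dist_eq_one_iff_adj.mpr h
  omega

/- ----- construction ----- -/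

open Classical in
noncomputable def par (G : SimpleGraph V) (r v : V) : V :=
  if h : G.Connected ∧ v ≠ r then (exists_down G h.1 r v h.2).choose else v

lemma par_spec {G : SimpleGraph V} (hG : G.Connected) {r v : V} (hv : v ≠ r) :
    G.Adj v (par G r v) ∧ G.dist v r = G.dist (par G r v) r + 1 := by
  rw [par]
  rw [dif_pos ⟨hG, hv⟩]
  exact (exists_down G hG r v hv).choose_spec

def selSet (G : SimpleGraph V) (r : V) : Set (Sym2 V) :=
  (fun v => s(v, par G r v)) '' {v | v ≠ r}

def goodF (G : SimpleGraph V) (r : V) : Set (Sym2 V) := G.edgeSet \ selSet G r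

lemma horiz_mem_goodF {G : SimpleGraph V} (hG : G.Connected) {r u v : V}
    (h : G.Adj u v) (hl : G.dist u r = G.dist v r) : s(u, v) ∈ goodF G r := by
  refine ⟨h, ?_⟩
  rintro ⟨z, hz, he⟩
  have hzs := par_spec hG hz
  simp only [Sym2.eq, Sym2.rel_iff', Prod.mk.injEq, Prod.swap_prod_mk] at he
  rcases he with ⟨h1, h2⟩ | ⟨h1, h2⟩ <;> subst h1 <;> subst h2 <;> omega

/-- a down-edge not in `goodF` must be the selected parent edge -/
lemma down_not_goodF {G : SimpleGraph V} (hG : G.Connected) {r u w : V}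
    (h : G.Adj u w) (hl : G.dist u r = G.dist w r + 1)
    (hF : s(u, w) ∉ goodF G r) : w = par G r u := by
  have he : s(u, w) ∈ selSet G r := by
    by_contra hc
    exact hF ⟨h, hc⟩
  obtain ⟨z, hz, he⟩ := he
  have hzs := par_spec hG hz
  simp only [Sym2.eq, Sym2.rel_iff', Prod.mk.injEq, Prod.swap_prod_mk] at he
  rcases he with ⟨h1, h2⟩ | ⟨h1, h2⟩
  · subst h1; exact h2.symm
  · subst h1; subst h2; omega

lemma selSet_subset {G : SimpleGraph V} (hG : G.Connected) (r : V) :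
    selSet G r ⊆ G.edgeSet := by
  rintro e ⟨z, hz, rfl⟩
  exact (par_spec hG hz).1

lemma selSet_ncard [Fintype V] {G : SimpleGraph V} (hG : G.Connected) (r : V) :
    (selSet G r).ncard = Fintype.card V - 1 := by
  rw [selSet, Set.ncard_image_of_injOn]
  · have : {v : V | v ≠ r} = Set.univ \ {r} := by ext; simp
    rw [this, Set.ncard_diff (by simp), Set.ncard_univ, Set.ncard_singleton,
      Nat.card_eq_fintype_card]
  · intro a ha b hb hab
    have has := par_spec hG ha
    have hbs := par_spec hG hb
    simp only [Sym2.eq, Sym2.rel_iff', Prod.mk.injEq, Prod.swap_prod_mk] at hab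
    rcases hab with ⟨h1, _⟩ | ⟨h1, h2⟩
    · exact h1
    · exfalso
      have e1 : G.dist a r = G.dist b r + 1 := h2 ▸ has.2
      have e2 : G.dist b r = G.dist a r + 1 := h1 ▸ hbs.2
      omega

lemma goodF_ncard [Fintype V] {G : SimpleGraph V} (hG : G.Connected) (r : V) :
    (goodF G r).ncard = G.edgeSet.ncard - (Fintype.card V - 1) := by
  unfold goodF
  have h := Set.ncard_diff (selSet_subset hG r) (Set.toFinite (selSet G r))
  rw [h, selSet_ncard hG r]

lemma mem_sym2_finite (e : Sym2 V) : {v : V | v ∈ e}.Finite := by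
  induction e using Sym2.ind with
  | _ a b =>
    have h : {v : V | v ∈ s(a,b)} = {a, b} := by ext v; simp
    rw [h]
    exact (Set.finite_singleton b).insert a

lemma endpoints_ncard_le (F : Set (Sym2 V)) (hF : F.Finite) :
    (endpoints F).ncard ≤ 2 * F.ncard := by
  refine Set.Finite.induction_on (motive := fun F _ => (endpoints F).ncard ≤ 2 * F.ncard) F hF (by simp [endpoints]) ?_
  intro e F he hFfin ih
  have h1 : endpoints (insert e F) ⊆ {v | v ∈ e} ∪ endpoints F := by
    rintro v ⟨f, hf, hvf⟩
    rcases hf with rfl | hf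
    · exact Or.inl hvf
    · exact Or.inr ⟨f, hf, hvf⟩
  calc (endpoints (insert e F)).ncard ≤ ({v | v ∈ e} ∪ endpoints F).ncard := by
        refine Set.ncard_le_ncard h1 ?_
        refine Set.Finite.union ?_ ?_
        · exact mem_sym2_finite e
        · -- endpoints of finite set of edges is finite
          have : endpoints F ⊆ ⋃ f ∈ F, {v | v ∈ f} := by
            rintro v ⟨f, hf, hvf⟩; exact Set.mem_biUnion hf hvf
          refine Set.Finite.subset ?_ this
          exact hFfin.biUnion (fun f _ => mem_sym2_finite f)
    _ ≤ {v | v ∈ e}.ncard + (endpoints F).ncard := Set.ncard_union_le _ _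
    _ ≤ 2 + 2 * F.ncard := by
        refine Nat.add_le_add ?_ ih
        obtain ⟨a, b⟩ := e
        have : {v | v ∈ s(a,b)} = {a, b} := by ext v; simp [Sym2.mem_iff]
        rw [this]
        exact (Set.ncard_insert_le _ _).trans (by simp)
    _ ≤ 2 * (insert e F).ncard := by rw [Set.ncard_insert_of_notMem he hFfin]; omega

lemma edgeDist_mk (G : SimpleGraph V) (s a b : V) :
    edgeDist G s s(a, b) = min (G.dist s a) (G.dist s b) := rfl

lemma descend {G : SimpleGraph V} (hG : G.Connected) {r u a : V}
    (hAu : G.dist a u + G.dist u r = G.dist a r) (hne : a ≠ u) :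
    ∃ b, G.Adj a b ∧ G.dist b u + G.dist u r = G.dist b r ∧
      G.dist b u + 1 = G.dist a u ∧ G.dist a r = G.dist b r + 1 := by
  have hd : G.dist a u ≠ 0 := by
    rw [SimpleGraph.dist_ne_zero_iff_ne_and_reachable]
    exact ⟨hne, hG.preconnected a u⟩
  obtain ⟨p, hp⟩ := (hG.preconnected a u).exists_walk_length_eq_dist
  cases p with
  | nil => simp at hp; omega
  | @cons _ b _ h q =>
    refine ⟨b, h, ?_⟩
    have h1 : G.dist b u ≤ q.length := SimpleGraph.dist_le q
    have h2 : G.dist a u ≤ G.dist a b + G.dist b u := hG.dist_triangle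
    have h3 : G.dist a b = 1 := SimpleGraph.dist_eq_one_iff_adj.mpr h
    have h4 : G.dist b r ≤ G.dist b u + G.dist u r := hG.dist_triangle
    have h5 : G.dist a r ≤ G.dist b r + 1 := dist_lip G hG r h
    have h6 : G.dist b r ≤ G.dist a r + 1 := dist_lip G hG r h.symm
    simp only [SimpleGraph.Walk.length_cons] at hp
    omega

lemma ascend_s10 {G : SimpleGraph V} (hG : G.Connected)
    (hδ : ∀ v : V, 2 ≤ (G.neighborSet v).ncard) [Fintype V] {r u v : V}
    (hAu : G.dist v u + G.dist u r = G.dist v r)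
    (hv : v ∉ endpoints (goodF G r)) :
    ∃ w, G.Adj v w ∧ G.dist w u + G.dist u r = G.dist w r ∧
      G.dist w r = G.dist v r + 1 := by
  have hup : ∀ w, G.Adj v w → G.dist w r = G.dist v r + 1 →
      G.dist w u + G.dist u r = G.dist w r ∧ G.dist w r = G.dist v r + 1 := by
    intro w hw hl
    have h2 : G.dist w u ≤ G.dist w v + G.dist v u := hG.dist_triangle
    have h3 : G.dist w v = 1 := SimpleGraph.dist_eq_one_iff_adj.mpr hw.symm
    have h4 : G.dist w r ≤ G.dist w u + G.dist u r := hG.dist_triangle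
    exact ⟨by omega, hl⟩
  -- every edge at v is not in goodF
  have hnF : ∀ w, G.Adj v w → s(v, w) ∉ goodF G r := by
    intro w hw hmem
    exact hv ⟨s(v, w), hmem, by simp⟩
  -- get two distinct neighbors
  have h2 : 1 < (G.neighborSet v).ncard := lt_of_lt_of_le one_lt_two (hδ v)
  rw [Set.one_lt_ncard (Set.toFinite _)] at h2
  obtain ⟨w₁, hw₁, w₂, hw₂, hne⟩ := h2
  rw [SimpleGraph.mem_neighborSet] at hw₁ hw₂
  have key : ∀ w, G.Adj v w → G.dist w r = G.dist v r + 1 ∨ w = par G r v := by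
    intro w hw
    have l1 : G.dist v r ≤ G.dist w r + 1 := dist_lip G hG r hw
    have l2 : G.dist w r ≤ G.dist v r + 1 := dist_lip G hG r hw.symm
    rcases Nat.lt_trichotomy (G.dist w r) (G.dist v r) with hl | hl | hl
    · exact Or.inr (down_not_goodF hG hw (by omega) (hnF w hw))
    · exact absurd (horiz_mem_goodF hG hw hl.symm) (hnF w hw)
    · exact Or.inl (by omega)
  rcases key w₁ hw₁ with hl | hp₁
  · exact ⟨w₁, hw₁, hup w₁ hw₁ hl⟩
  rcases key w₂ hw₂ with hl | hp₂
  · exact ⟨w₂, hw₂, hup w₂ hw₂ hl⟩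
  exact absurd (hp₁.trans hp₂.symm) hne

lemma exists_S_tight {G : SimpleGraph V} (hG : G.Connected)
    (hδ : ∀ v : V, 2 ≤ (G.neighborSet v).ncard) [Fintype V] {r u : V} :
    ∃ s ∈ endpoints (goodF G r), G.dist s u + G.dist u r = G.dist s r := by
  have hne : ({a : V | G.dist a u + G.dist u r = G.dist a r}).Nonempty :=
    ⟨u, by simp⟩
  obtain ⟨a, ha, hmax⟩ := Set.exists_max_image _ (fun a => G.dist a r)
    (Set.toFinite _) hne
  by_cases haS : a ∈ endpoints (goodF G r)
  · exact ⟨a, haS, ha⟩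
  · obtain ⟨w, hadj, hw, hl⟩ := ascend_s10 hG hδ ha haS
    have := hmax w hw
    omega

lemma vert {G : SimpleGraph V} (hG : G.Connected)
    (hδ : ∀ v : V, 2 ≤ (G.neighborSet v).ncard) [Fintype V] {r : V}
    {S : Set V} (hS : endpoints (goodF G r) ⊆ S) {u a x b : V}
    (hua : G.Adj u a) (hxb : G.Adj x b)
    (hla : G.dist u r = G.dist a r + 1) (hlb : G.dist x r = G.dist b r + 1)
    (hlvl : G.dist u r = G.dist x r)
    (hFa : s(u, a) ∉ goodF G r) (hFb : s(x, b) ∉ goodF G r)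
    (hund : ∀ s ∈ S, edgeDist G s s(u, a) = edgeDist G s s(x, b)) :
    s(u, a) = s(x, b) := by
  have hur : u ≠ r := by
    intro h; subst h; simp [SimpleGraph.dist_self] at hla
  have hxr : x ≠ r := by
    intro h; subst h; simp [SimpleGraph.dist_self] at hlb
  have hpa : a = par G r u := down_not_goodF hG hua hla hFa
  have hpb : b = par G r x := down_not_goodF hG hxb hlb hFb
  by_cases hux : u = x
  · subst hux; rw [hpa, hpb]
  exfalso
  have huS : u ∉ S := by
    intro hu
    have h0 := hund u hu
    rw [edgeDist_mk, edgeDist_mk, SimpleGraph.dist_self] at h0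
    have hmin : G.dist u x = 0 ∨ G.dist u b = 0 := by omega
    rcases hmin with h | h
    · exact hux (hG.dist_eq_zero_iff.mp h)
    · have : u = b := hG.dist_eq_zero_iff.mp h
      subst this; omega
  have hxS : x ∉ S := by
    intro hx
    have h0 := hund x hx
    rw [edgeDist_mk, edgeDist_mk, SimpleGraph.dist_self] at h0
    have hmin : G.dist x u = 0 ∨ G.dist x a = 0 := by omega
    rcases hmin with h | h
    · exact hux (hG.dist_eq_zero_iff.mp h).symm
    · have : x = a := hG.dist_eq_zero_iff.mp h
      subst this; omega
  have step5 : ∀ s ∈ S, G.dist s u + G.dist u r = G.dist s r →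
      G.dist s x + G.dist x r = G.dist s r := by
    intro s hs ht
    have h0 := hund s hs
    rw [edgeDist_mk, edgeDist_mk] at h0
    have t1 : G.dist s r ≤ G.dist s a + G.dist a r := hG.dist_triangle
    have t2 : G.dist s r ≤ G.dist s x + G.dist x r := hG.dist_triangle
    have t3 : G.dist s r ≤ G.dist s b + G.dist b r := hG.dist_triangle
    omega
  have step5' : ∀ s ∈ S, G.dist s x + G.dist x r = G.dist s r →
      G.dist s u + G.dist u r = G.dist s r := by
    intro s hs ht
    have h0 := hund s hs
    rw [edgeDist_mk, edgeDist_mk] at h0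
    have t1 : G.dist s r ≤ G.dist s b + G.dist b r := hG.dist_triangle
    have t2 : G.dist s r ≤ G.dist s u + G.dist u r := hG.dist_triangle
    have t3 : G.dist s r ≤ G.dist s a + G.dist a r := hG.dist_triangle
    omega
  obtain ⟨s₀, hs₀S, hs₀t⟩ := exists_S_tight hG hδ (r := r) (u := u)
  have hTne : ({t | t ∈ S ∧ G.dist t u + G.dist u r = G.dist t r ∧
      G.dist t x + G.dist x r = G.dist t r}).Nonempty :=
    ⟨s₀, hS hs₀S, hs₀t, step5 s₀ (hS hs₀S) hs₀t⟩
  obtain ⟨s, hsT, hmin⟩ := Set.exists_min_image _ (fun t => G.dist t r)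
    (Set.toFinite _) hTne
  obtain ⟨hsS, hstu, hstx⟩ := hsT
  have main : ∀ n w, G.dist w u = n → G.dist w u + G.dist u r = G.dist w r →
      G.dist w x + G.dist x r = G.dist w r → G.dist w r ≤ G.dist s r →
      (w ∉ S ∨ w = s) → u = x := by
    intro n
    induction n with
    | zero =>
      intro w h0 _ htx _ _
      have hwu : w = u := hG.dist_eq_zero_iff.mp h0
      subst hwu
      have : G.dist w x = 0 := by omega
      exact hG.dist_eq_zero_iff.mp this
    | succ n ih =>
      intro w hn htu htx hls hw
      have hwu : w ≠ u := by
        intro h; subst h; simp [SimpleGraph.dist_self] at hn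
      by_cases hwx : w = x
      · subst hwx
        have : G.dist w u = 0 := by omega
        exact (hG.dist_eq_zero_iff.mp this).symm
      obtain ⟨a₁, hadj₁, ht₁, hd₁, hl₁⟩ := descend hG htu hwu
      obtain ⟨b₁, hadj₂, ht₂, hd₂, hl₂⟩ := descend hG htx hwx
      have hEa : s(w, a₁) ∉ goodF G r := by
        intro hmem
        have hwS : w ∈ S := hS ⟨_, hmem, by simp⟩
        have hws : w = s := hw.resolve_left (not_not_intro hwS)
        have ha₁S : a₁ ∈ S := hS ⟨_, hmem, by simp⟩
        have hmm := hmin a₁ ⟨ha₁S, ht₁, step5 a₁ ha₁S ht₁⟩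
        rw [hws] at hl₁
        omega
      have hEb : s(w, b₁) ∉ goodF G r := by
        intro hmem
        have hwS : w ∈ S := hS ⟨_, hmem, by simp⟩
        have hws : w = s := hw.resolve_left (not_not_intro hwS)
        have hb₁S : b₁ ∈ S := hS ⟨_, hmem, by simp⟩
        have hb₁u : G.dist b₁ u + G.dist u r = G.dist b₁ r :=
          step5' b₁ hb₁S ht₂
        have hmm := hmin b₁ ⟨hb₁S, hb₁u, ht₂⟩
        rw [hws] at hl₂
        omega
      have hwr : w ≠ r := by
        intro h
        rw [h, SimpleGraph.dist_self] at htu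
        exact hur (hG.dist_eq_zero_iff.mp (by omega))
      have h1 : a₁ = par G r w := down_not_goodF hG hadj₁ hl₁ hEa
      have h2 : b₁ = par G r w := down_not_goodF hG hadj₂ hl₂ hEb
      have hab : a₁ = b₁ := h1.trans h2.symm
      subst hab
      have ha₁S : a₁ ∉ S := by
        intro hA
        have := hmin a₁ ⟨hA, ht₁, ht₂⟩
        omega
      exact ih a₁ (by omega) ht₁ ht₂ (by omega) (Or.inl ha₁S)
  exact hux (main (G.dist s u) s rfl hstu hstx le_rfl (Or.inr rfl))

lemma und_not_goodF {G : SimpleGraph V} (hG : G.Connected) {r : V}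
    {S : Set V} (hS : endpoints (goodF G r) ⊆ S) {e f : Sym2 V}
    (he : e ∈ G.edgeSet)
    (hund : ∀ s ∈ S, edgeDist G s e = edgeDist G s f) (hne : e ≠ f) :
    e ∉ goodF G r := by
  intro hmem
  induction e using Sym2.ind with
  | _ u v =>
    induction f using Sym2.ind with
    | _ x y =>
      have hadj : G.Adj u v := he
      have huS : u ∈ S := hS ⟨_, hmem, by simp⟩
      have hvS : v ∈ S := hS ⟨_, hmem, by simp⟩
      have h0 := hund u huS
      have h1 := hund v hvS
      rw [edgeDist_mk, edgeDist_mk, SimpleGraph.dist_self] at h0 h1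
      have hcm : G.dist v u = G.dist u v := SimpleGraph.dist_comm
      have hd1 : G.dist v u = 1 := SimpleGraph.dist_eq_one_iff_adj.mpr hadj.symm
      have hux : G.dist u x = 0 ∨ G.dist u y = 0 := by omega
      have hvx : G.dist v x = 0 ∨ G.dist v y = 0 := by omega
      have huf : u ∈ s(x, y) := by
        rcases hux with h | h
        · rw [Sym2.mem_iff]; exact Or.inl (hG.dist_eq_zero_iff.mp h)
        · rw [Sym2.mem_iff]; exact Or.inr (hG.dist_eq_zero_iff.mp h)
      have hvf : v ∈ s(x, y) := by
        rcases hvx with h | h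
        · rw [Sym2.mem_iff]; exact Or.inl (hG.dist_eq_zero_iff.mp h)
        · rw [Sym2.mem_iff]; exact Or.inr (hG.dist_eq_zero_iff.mp h)
      exact hne ((Sym2.mem_and_mem_iff hadj.ne).mp ⟨huf, hvf⟩).symm

lemma orient {G : SimpleGraph V} (hG : G.Connected) {r : V} {e : Sym2 V}
    (he : e ∈ G.edgeSet) (hF : e ∉ goodF G r) :
    ∃ u a, e = s(u, a) ∧ G.Adj u a ∧ G.dist u r = G.dist a r + 1 := by
  induction e using Sym2.ind with
  | _ u v =>
    have hadj : G.Adj u v := he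
    have l1 : G.dist u r ≤ G.dist v r + 1 := dist_lip G hG r hadj
    have l2 : G.dist v r ≤ G.dist u r + 1 := dist_lip G hG r hadj.symm
    have hne : G.dist u r ≠ G.dist v r := by
      intro h
      exact hF (horiz_mem_goodF hG hadj h)
    rcases Nat.lt_trichotomy (G.dist u r) (G.dist v r) with hl | hl | hl
    · exact ⟨v, u, Sym2.eq_swap, hadj.symm, by omega⟩
    · exact absurd hl hne
    · exact ⟨u, v, rfl, hadj, by omega⟩

lemma resolving_insert_r {G : SimpleGraph V} (hG : G.Connected)
    (hδ : ∀ v : V, 2 ≤ (G.neighborSet v).ncard) [Fintype V] (r : V) :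
    IsEdgeResolving G (insert r (endpoints (goodF G r))) := by
  intro e he f hf hne
  by_contra hc
  push_neg at hc
  have hS : endpoints (goodF G r) ⊆ insert r (endpoints (goodF G r)) :=
    Set.subset_insert _ _
  have hund : ∀ s ∈ insert r (endpoints (goodF G r)),
      edgeDist G s e = edgeDist G s f := hc
  have heF : e ∉ goodF G r := und_not_goodF hG hS he hund hne
  have hfF : f ∉ goodF G r := und_not_goodF hG hS hf
    (fun s hs => (hund s hs).symm) hne.symm
  obtain ⟨u, a, rfl, hadj, hl⟩ := orient hG he heF
  obtain ⟨x, b, rfl, hadj', hl'⟩ := orient hG hf hfF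
  have h0 := hund r (Set.mem_insert _ _)
  rw [edgeDist_mk, edgeDist_mk] at h0
  have c1 : G.dist r u = G.dist u r := SimpleGraph.dist_comm
  have c2 : G.dist r a = G.dist a r := SimpleGraph.dist_comm
  have c3 : G.dist r x = G.dist x r := SimpleGraph.dist_comm
  have c4 : G.dist r b = G.dist b r := SimpleGraph.dist_comm
  have hlvl : G.dist u r = G.dist x r := by omega
  exact hne (vert hG hδ hS hadj hadj' hl hl' hlvl heF hfF hund)

lemma bound1 [Fintype V] (G : SimpleGraph V) (hG : G.Connected)
    (hδ : ∀ v : V, 2 ≤ (G.neighborSet v).ncard) :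
    edgeMetricDim G ≤ 2 * cyclomatic G + 1 := by
  obtain ⟨r⟩ := hG.nonempty
  have hres := resolving_insert_r hG hδ r
  have hle : edgeMetricDim G ≤ (insert r (endpoints (goodF G r))).ncard :=
    Nat.sInf_le ⟨_, hres, rfl⟩
  have h2 : (insert r (endpoints (goodF G r))).ncard ≤
      (endpoints (goodF G r)).ncard + 1 := Set.ncard_insert_le _ _
  have h3 := endpoints_ncard_le (goodF G r) (Set.toFinite _)
  have h4 := goodF_ncard hG r
  have h5 : cyclomatic G = G.edgeSet.ncard + 1 - Fintype.card V := rfl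
  omega

/- ----- cut vertex machinery ----- -/

def Avoid (G : SimpleGraph V) (r a b : V) : Prop :=
  ∃ p : G.Walk a b, r ∉ p.support

lemma avoid_refl {G : SimpleGraph V} {r a : V} (h : a ≠ r) : Avoid G r a a :=
  ⟨SimpleGraph.Walk.nil, by simp [Ne.symm h]⟩

lemma avoid_symm {G : SimpleGraph V} {r a b : V} (h : Avoid G r a b) :
    Avoid G r b a := by
  obtain ⟨p, hp⟩ := h
  exact ⟨p.reverse, by simpa [SimpleGraph.Walk.support_reverse] using hp⟩

lemma avoid_trans {G : SimpleGraph V} {r a b c : V} (h1 : Avoid G r a b)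
    (h2 : Avoid G r b c) : Avoid G r a c := by
  obtain ⟨p, hp⟩ := h1
  obtain ⟨q, hq⟩ := h2
  refine ⟨p.append q, ?_⟩
  rw [SimpleGraph.Walk.support_append]
  intro hmem
  rcases List.mem_append.mp hmem with h | h
  · exact hp h
  · exact hq (List.mem_of_mem_tail h)

lemma avoid_adj {G : SimpleGraph V} {r a b : V} (h : G.Adj a b) (ha : a ≠ r)
    (hb : b ≠ r) : Avoid G r a b := by
  refine ⟨SimpleGraph.Walk.cons h SimpleGraph.Walk.nil, ?_⟩
  simp [Ne.symm ha, Ne.symm hb]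

lemma avoid_ne_left {G : SimpleGraph V} {r a b : V} (h : Avoid G r a b) :
    a ≠ r := by
  obtain ⟨p, hp⟩ := h
  intro hr
  exact hp (hr ▸ p.start_mem_support)

lemma not_avoid_dist {G : SimpleGraph V} (hG : G.Connected) {r a b : V}
    (h : ¬ Avoid G r a b) : G.dist a b = G.dist a r + G.dist r b := by
  haveI := Classical.decEq V
  obtain ⟨p, hp⟩ := (hG.preconnected a b).exists_walk_length_eq_dist
  have hr : r ∈ p.support := by
    by_contra hc
    exact h ⟨p, hc⟩
  have hsplit := congrArg SimpleGraph.Walk.length (p.take_spec hr)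
  rw [SimpleGraph.Walk.length_append] at hsplit
  have h1 : G.dist a r ≤ (p.takeUntil r hr).length := SimpleGraph.dist_le _
  have h2 : G.dist r b ≤ (p.dropUntil r hr).length := SimpleGraph.dist_le _
  have h3 : G.dist a b ≤ G.dist a r + G.dist r b := hG.dist_triangle
  omega

lemma walk_to_induce {G : SimpleGraph V} {s : Set V} {a b : V} (p : G.Walk a b)
    (hp : ∀ v ∈ p.support, v ∈ s) (ha : a ∈ s) (hb : b ∈ s) :
    (G.induce s).Reachable ⟨a, ha⟩ ⟨b, hb⟩ := by
  induction p with
  | nil => rfl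
  | @cons a c b h q ih =>
    have hc : c ∈ s := hp c (by simp)
    have h1 : (G.induce s).Adj ⟨a, ha⟩ ⟨c, hc⟩ := by
      simp only [SimpleGraph.comap_adj, Function.Embedding.coe_subtype]
      exact h
    exact (h1.reachable).trans (ih (fun v hv => hp v (by simp [hv])) hc hb)

lemma cut_separates [Fintype V] {G : SimpleGraph V} (hG : G.Connected)
    (hδ : ∀ v : V, 2 ≤ (G.neighborSet v).ncard) {r : V}
    (hcut : IsCutVertex G r) : ∃ a b, a ≠ r ∧ b ≠ r ∧ ¬ Avoid G r a b := by
  rw [IsCutVertex, SimpleGraph.connected_iff] at hcut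
  have hne : Nonempty ({u : V | u ≠ r}) := by
    have h2 : 1 < (G.neighborSet r).ncard := lt_of_lt_of_le one_lt_two (hδ r)
    rw [Set.one_lt_ncard (Set.toFinite _)] at h2
    obtain ⟨w, hw, _⟩ := h2
    exact ⟨⟨w, (G.ne_of_adj hw).symm⟩⟩
  have hpre : ¬ (G.induce {u : V | u ≠ r}).Preconnected := by
    intro hp
    exact hcut ⟨hp, hne⟩
  unfold SimpleGraph.Preconnected at hpre
  push_neg at hpre
  obtain ⟨⟨a, ha⟩, ⟨b, hb⟩, hnr⟩ := hpre
  refine ⟨a, b, ha, hb, ?_⟩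
  rintro ⟨p, hp⟩
  exact hnr (walk_to_induce p (fun v hv => by
    intro hveq
    exact hp (hveq ▸ hv)) ha hb)

lemma exists_S_avoid {G : SimpleGraph V} (hG : G.Connected)
    (hδ : ∀ v : V, 2 ≤ (G.neighborSet v).ncard) [Fintype V] {r c : V}
    (hc : c ≠ r) : ∃ s ∈ endpoints (goodF G r), Avoid G r s c := by
  have hne : ({w : V | Avoid G r w c}).Nonempty := ⟨c, avoid_refl hc⟩
  obtain ⟨w, hw, hmax⟩ := Set.exists_max_image _ (fun w => G.dist w r)
    (Set.toFinite _) hne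
  by_cases hwS : w ∈ endpoints (goodF G r)
  · exact ⟨w, hwS, hw⟩
  · exfalso
    have htriv : G.dist w w + G.dist w r = G.dist w r := by
      simp [SimpleGraph.dist_self]
    obtain ⟨w', hadj, _, hl⟩ := ascend_s10 hG hδ htriv hwS
    have hwr : w ≠ r := avoid_ne_left hw
    have hw'r : w' ≠ r := by
      intro h
      rw [h, SimpleGraph.dist_self] at hl
      omega
    have hw' : Avoid G r w' c := avoid_trans (avoid_adj hadj.symm hw'r hwr) hw
    have := hmax w' hw'
    omega

lemma tight_avoid {G : SimpleGraph V} (hG : G.Connected) {r x : V}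
    (hx : x ≠ r) : ∀ n w, G.dist w x = n →
    G.dist w x + G.dist x r = G.dist w r → Avoid G r w x := by
  intro n
  induction n with
  | zero =>
    intro w h0 _
    have hwx : w = x := hG.dist_eq_zero_iff.mp h0
    subst hwx
    exact avoid_refl hx
  | succ n ih =>
    intro w hn ht
    have hwx : w ≠ x := by
      intro h; rw [h, SimpleGraph.dist_self] at hn; omega
    obtain ⟨b₁, hadj, ht₁, hd₁, hl₁⟩ := descend hG ht hwx
    have hwr : w ≠ r := by
      intro h
      rw [h, SimpleGraph.dist_self] at ht
      exact hx (hG.dist_eq_zero_iff.mp (by omega))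
    have hb₁r : b₁ ≠ r := by
      intro h
      rw [h, SimpleGraph.dist_self] at ht₁
      exact hx (hG.dist_eq_zero_iff.mp (by omega))
    exact avoid_trans (avoid_adj hadj hwr hb₁r) (ih b₁ (by omega) ht₁)

lemma dist_split_edge {G : SimpleGraph V} (hG : G.Connected) {r s u w : V}
    (hsu : ¬ Avoid G r s u) (hur : u ≠ r) (hadj : G.Adj u w) :
    G.dist s w = G.dist s r + G.dist r w := by
  by_cases hwr : w = r
  · subst hwr; simp [SimpleGraph.dist_self]
  · refine not_avoid_dist hG ?_
    intro h
    exact hsu (avoid_trans h (avoid_symm (avoid_adj hadj hur hwr)))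

lemma resolving_cut {G : SimpleGraph V} (hG : G.Connected)
    (hδ : ∀ v : V, 2 ≤ (G.neighborSet v).ncard) [Fintype V] {r : V}
    (hcut : IsCutVertex G r) :
    IsEdgeResolving G (endpoints (goodF G r)) := by
  obtain ⟨a₀, b₀, ha₀, hb₀, hsep⟩ := cut_separates hG hδ hcut
  intro e he f hf hne
  by_contra hc
  push_neg at hc
  have hund : ∀ s ∈ endpoints (goodF G r), edgeDist G s e = edgeDist G s f := hc
  have hS : endpoints (goodF G r) ⊆ endpoints (goodF G r) := subset_rfl
  have heF : e ∉ goodF G r := und_not_goodF hG hS he hund hne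
  have hfF : f ∉ goodF G r := und_not_goodF hG hS hf
    (fun s hs => (hund s hs).symm) hne.symm
  obtain ⟨u, a, rfl, hadj, hl⟩ := orient hG he heF
  obtain ⟨x, b, rfl, hadj', hl'⟩ := orient hG hf hfF
  have hur : u ≠ r := by
    intro h; rw [h, SimpleGraph.dist_self] at hl; omega
  have hxr : x ≠ r := by
    intro h; rw [h, SimpleGraph.dist_self] at hl'; omega
  by_cases hux : u = x
  · subst hux
    refine hne ?_
    rw [down_not_goodF hG hadj hl heF, down_not_goodF hG hadj' hl' hfF]
  by_cases hA : Avoid G r u x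
  · -- u and x in the same component; use a far-away vertex to equalize levels
    have hc0 : ∃ c, c ≠ r ∧ ¬ Avoid G r u c := by
      by_cases h1 : Avoid G r u a₀
      · refine ⟨b₀, hb₀, fun h2 => hsep (avoid_trans (avoid_symm h1) h2)⟩
      · exact ⟨a₀, ha₀, h1⟩
    obtain ⟨c₀, hc₀r, hc₀⟩ := hc0
    obtain ⟨s, hsS, hsc⟩ := exists_S_avoid hG hδ hc₀r
    have hsu : ¬ Avoid G r s u := fun h => hc₀ (avoid_trans (avoid_symm h) hsc)
    have hsx : ¬ Avoid G r s x := fun h =>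
      hc₀ (avoid_trans hA (avoid_trans (avoid_symm h) hsc))
    have d1 : G.dist s u = G.dist s r + G.dist r u := not_avoid_dist hG hsu
    have d2 : G.dist s a = G.dist s r + G.dist r a := dist_split_edge hG hsu hur hadj
    have d3 : G.dist s x = G.dist s r + G.dist r x := not_avoid_dist hG hsx
    have d4 : G.dist s b = G.dist s r + G.dist r b := dist_split_edge hG hsx hxr hadj'
    have h0 := hund s hsS
    rw [edgeDist_mk, edgeDist_mk] at h0
    have c1 : G.dist r u = G.dist u r := SimpleGraph.dist_comm
    have c2 : G.dist r a = G.dist a r := SimpleGraph.dist_comm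
    have c3 : G.dist r x = G.dist x r := SimpleGraph.dist_comm
    have c4 : G.dist r b = G.dist b r := SimpleGraph.dist_comm
    have hlvl : G.dist u r = G.dist x r := by omega
    exact hne (vert hG hδ hS hadj hadj' hl hl' hlvl heF hfF hund)
  · -- u and x separated by r
    exfalso
    obtain ⟨s, hsS, hst⟩ := exists_S_tight hG hδ (r := r) (u := x)
    have hsx : Avoid G r s x := tight_avoid hG hxr (G.dist s x) s rfl hst
    have hsu : ¬ Avoid G r s u := fun h => hA (avoid_trans (avoid_symm h) hsx)
    have d1 : G.dist s u = G.dist s r + G.dist r u := not_avoid_dist hG hsu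
    have d2 : G.dist s a = G.dist s r + G.dist r a := dist_split_edge hG hsu hur hadj
    have t3 : G.dist s r ≤ G.dist s b + G.dist b r := hG.dist_triangle
    have h0 := hund s hsS
    rw [edgeDist_mk, edgeDist_mk] at h0
    have c1 : G.dist r u = G.dist u r := SimpleGraph.dist_comm
    have c2 : G.dist r a = G.dist a r := SimpleGraph.dist_comm
    omega

lemma bound2 [Fintype V] (G : SimpleGraph V) (hG : G.Connected)
    (hδ : ∀ v : V, 2 ≤ (G.neighborSet v).ncard) {r : V}
    (hcut : IsCutVertex G r) :
    edgeMetricDim G ≤ 2 * cyclomatic G := by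
  have hres := resolving_cut hG hδ hcut
  have hle : edgeMetricDim G ≤ (endpoints (goodF G r)).ncard :=
    Nat.sInf_le ⟨_, hres, rfl⟩
  have h3 := endpoints_ncard_le (goodF G r) (Set.toFinite _)
  have h4 := goodF_ncard hG r
  have h5 : cyclomatic G = G.edgeSet.ncard + 1 - Fintype.card V := rfl
  omega

theorem stmt_10 [Fintype V] (G : SimpleGraph V) (hG : G.Connected)
    (hδ : ∀ v : V, 2 ≤ (G.neighborSet v).ncard) :
    edgeMetricDim G ≤ 2 * cyclomatic G + 1 ∧
    ((∃ v : V, IsCutVertex G v) → edgeMetricDim G ≤ 2 * cyclomatic G) := by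
  refine ⟨bound1 G hG hδ, ?_⟩
  rintro ⟨v, hv⟩
  exact bound2 G hG hδ hv
end

section
/- Let G be a connected graph with minimum degree at least 2. Then the mixed metric dimension of G is at most 2·c(G) + 1; if moreover G contains a cut-vertex, then the mixed metric dimension of G is at most 2·c(G). -/
open SimpleGraph

variable {V : Type*}

section MDimAux

private lemma dist_step {G : SimpleGraph V} {x u : V} {t : ℕ}
    (h : G.dist x u = t + 1) : ∃ a, G.Adj x a ∧ G.dist a u = t := by
  obtain ⟨p, hp⟩ := SimpleGraph.exists_walk_of_dist_ne_zero (by omega : G.dist x u ≠ 0)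
  cases p with
  | nil => rw [SimpleGraph.Walk.length_nil] at hp; omega
  | @cons _ a _ hadj q =>
    refine ⟨a, hadj, le_antisymm ?_ ?_⟩
    · have h1 := SimpleGraph.dist_le q
      rw [SimpleGraph.Walk.length_cons] at hp
      omega
    · obtain ⟨w, hw⟩ := q.reachable.exists_walk_length_eq_dist
      have h2 := SimpleGraph.dist_le (SimpleGraph.Walk.cons hadj w)
      rw [SimpleGraph.Walk.length_cons] at h2
      omega

open Classical in
noncomputable def gpar (G : SimpleGraph V) (r : V) (v : V) : V :=
  if h : ∃ u, G.Adj v u ∧ G.dist r u + 1 = G.dist r v then h.choose else r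

lemma gpar_spec {G : SimpleGraph V} (hG : G.Connected) {r v : V} (hv : v ≠ r) :
    G.Adj v (gpar G r v) ∧ G.dist r (gpar G r v) + 1 = G.dist r v := by
  have hpos : 0 < G.dist v r := hG.pos_dist_of_ne hv
  obtain ⟨t, ht⟩ : ∃ t, G.dist v r = t + 1 := ⟨G.dist v r - 1, by omega⟩
  obtain ⟨a, ha, hd⟩ := dist_step ht
  have hex : ∃ u, G.Adj v u ∧ G.dist r u + 1 = G.dist r v :=
    ⟨a, ha, by rw [SimpleGraph.dist_comm (u := r) (v := a), SimpleGraph.dist_comm (u := r) (v := v)]; omega⟩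
  rw [gpar, dif_pos hex]
  exact hex.choose_spec

def treeE (G : SimpleGraph V) (r : V) : Set (Sym2 V) :=
  (fun v => s(v, gpar G r v)) '' {v | v ≠ r}

def coF (G : SimpleGraph V) (r : V) : Set (Sym2 V) := G.edgeSet \ treeE G r

def S0 (G : SimpleGraph V) (r : V) : Set V := endpoints (coF G r)

lemma treeE_shape {G : SimpleGraph V} {r a b : V} (h : s(a, b) ∈ treeE G r) :
    (a ≠ r ∧ b = gpar G r a) ∨ (b ≠ r ∧ a = gpar G r b) := by
  obtain ⟨v, hv, he⟩ := h
  rw [Sym2.eq_iff] at he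
  rcases he with ⟨h1, h2⟩ | ⟨h1, h2⟩
  · subst h1; exact Or.inl ⟨hv, h2.symm⟩
  · subst h1; exact Or.inr ⟨hv, h2.symm⟩

lemma edge_in_coF {G : SimpleGraph V} {r a b : V} (hadj : G.Adj a b)
    (h : s(a, b) ∉ treeE G r) : a ∈ S0 G r ∧ b ∈ S0 G r :=
  ⟨⟨s(a, b), ⟨hadj, h⟩, Sym2.mem_mk_left a b⟩, ⟨s(a, b), ⟨hadj, h⟩, Sym2.mem_mk_right a b⟩⟩

lemma tree_of_not_S0 {G : SimpleGraph V} {r v w : V} (hv : v ∉ S0 G r) (hadj : G.Adj v w) :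
    s(v, w) ∈ treeE G r := by
  by_contra h
  exact hv (edge_in_coF hadj h).1

lemma level_adj {G : SimpleGraph V} (hG : G.Connected) {a b : V} (h : G.Adj a b) (r : V) :
    G.dist r b ≤ G.dist r a + 1 := by
  have h1 := hG.dist_triangle (u := r) (v := a) (w := b)
  have h2 : G.dist a b ≤ 1 := by simpa using SimpleGraph.dist_le h.toWalk
  omega

lemma exists_child [Fintype V] {G : SimpleGraph V} (hG : G.Connected)
    (hδ : ∀ v : V, 2 ≤ (G.neighborSet v).ncard) {r v : V} (hv : v ∉ S0 G r) :
    ∃ u, G.Adj v u ∧ u ≠ r ∧ G.dist r u = G.dist r v + 1 := by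
  obtain ⟨w1, w2, hw1, hw2, hne⟩ := (Set.one_lt_ncard_iff (G.neighborSet v).toFinite).mp
    (lt_of_lt_of_le one_lt_two (hδ v))
  have k1 := treeE_shape (tree_of_not_S0 hv hw1)
  have k2 := treeE_shape (tree_of_not_S0 hv hw2)
  rcases k1 with ⟨hvr, h1⟩ | ⟨h1r, h1⟩
  · rcases k2 with ⟨_, h2⟩ | ⟨h2r, h2⟩
    · exact absurd (h1.trans h2.symm) hne
    · exact ⟨w2, hw2, h2r, by have := (gpar_spec hG h2r).2; rw [← h2] at this; omega⟩
  · exact ⟨w1, hw1, h1r, by have := (gpar_spec hG h1r).2; rw [← h1] at this; omega⟩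

lemma exists_witness [Fintype V] {G : SimpleGraph V} (hG : G.Connected)
    (hδ : ∀ v : V, 2 ≤ (G.neighborSet v).ncard) (r : V) (v : V) :
    ∃ s ∈ S0 G r, G.dist r s = G.dist s v + G.dist r v := by
  classical
  set M := Finset.univ.sup (fun v : V => G.dist r v) with hM
  suffices H : ∀ (n : ℕ) (v : V), M ≤ G.dist r v + n →
      ∃ s ∈ S0 G r, G.dist r s = G.dist s v + G.dist r v by
    exact H M v (by omega)
  intro n
  induction n with
  | zero =>
    intro v hv
    by_cases hvS : v ∈ S0 G r
    · exact ⟨v, hvS, by rw [SimpleGraph.dist_self]; omega⟩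
    · obtain ⟨u, hu1, hu2, hu3⟩ := exists_child hG hδ hvS
      have hle : G.dist r u ≤ M := Finset.le_sup (Finset.mem_univ u)
      omega
  | succ n ih =>
    intro v hv
    by_cases hvS : v ∈ S0 G r
    · exact ⟨v, hvS, by rw [SimpleGraph.dist_self]; omega⟩
    · obtain ⟨u, hu1, hu2, hu3⟩ := exists_child hG hδ hvS
      obtain ⟨s, hs, hseq⟩ := ih u (by omega)
      refine ⟨s, hs, ?_⟩
      have e1 : G.dist u v ≤ 1 := by simpa using SimpleGraph.dist_le hu1.symm.toWalk
      have t1 : G.dist s v ≤ G.dist s u + G.dist u v := hG.dist_triangle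
      have t2 : G.dist r s ≤ G.dist r v + G.dist v s := hG.dist_triangle
      have c1 : G.dist v s = G.dist s v := SimpleGraph.dist_comm
      omega

lemma covers_eq {G : SimpleGraph V} (hG : G.Connected) (r : V) (u v : V) (T : ℕ)
    (hu : G.dist r u = T) (hv : G.dist r v = T)
    (htr : ∀ s ∈ S0 G r, ∀ t, G.dist r s = t + T → (G.dist s u = t ↔ G.dist s v = t)) :
    ∀ t x, G.dist r x = t + T → G.dist x u = t → G.dist x v = t → u = v := by
  intro t
  induction t with
  | zero =>
    intro x hx hxu hxv
    have h1 : x = u := hG.dist_eq_zero_iff.mp hxu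
    have h2 : x = v := hG.dist_eq_zero_iff.mp hxv
    rw [← h1, ← h2]
  | succ t ih =>
    intro x hx hxu hxv
    obtain ⟨a, haadj, hau⟩ := dist_step hxu
    obtain ⟨b, hbadj, hbv⟩ := dist_step hxv
    have hra : G.dist r a = t + T := by
      have t1 : G.dist r a ≤ G.dist r u + G.dist u a := hG.dist_triangle
      have c1 : G.dist u a = G.dist a u := SimpleGraph.dist_comm
      have t2 := level_adj hG haadj.symm r
      omega
    have hrb : G.dist r b = t + T := by
      have t1 : G.dist r b ≤ G.dist r v + G.dist v b := hG.dist_triangle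
      have c1 : G.dist v b = G.dist b v := SimpleGraph.dist_comm
      have t2 := level_adj hG hbadj.symm r
      omega
    by_cases hab : a = b
    · exact ih a hra hau (hab ▸ hbv)
    · have hxr : x ≠ r := by
        intro h
        rw [h, SimpleGraph.dist_self] at hx
        omega
      have shape : ∀ c : V, G.Adj x c → G.dist r c = t + T →
          s(x, c) ∈ treeE G r → c = gpar G r x := by
        intro c hc hrc htree
        rcases treeE_shape htree with ⟨_, h2⟩ | ⟨h1, h2⟩
        · exact h2
        · exfalso
          have := (gpar_spec hG h1).2
          rw [← h2] at this
          omega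
      by_cases h1 : s(x, a) ∈ treeE G r
      · by_cases h2 : s(x, b) ∈ treeE G r
        · exact absurd ((shape a haadj hra h1).trans (shape b hbadj hrb h2).symm) hab
        · have hbS : b ∈ S0 G r := (edge_in_coF hbadj h2).2
          exact ih b hrb ((htr b hbS t hrb).mpr hbv) hbv
      · have haS : a ∈ S0 G r := (edge_in_coF haadj h1).2
        exact ih a hra hau ((htr a haS t hra).mp hau)

lemma mixedDist_inl (G : SimpleGraph V) (s v : V) :
    mixedDist G s (Sum.inl v) = G.dist s v := rfl

lemma mixedDist_inr (G : SimpleGraph V) (s a b : V) :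
    mixedDist G s (Sum.inr s(a, b)) = min (G.dist s a) (G.dist s b) := by
  simp [mixedDist, edgeDist]

def VForm (G : SimpleGraph V) (r : V) (γ : V ⊕ Sym2 V) (z : V) : Prop :=
  γ = Sum.inl z ∨ ∃ c, G.Adj c z ∧ G.dist r z = G.dist r c + 1 ∧ γ = Sum.inr s(c, z)

lemma vform_A {G : SimpleGraph V} (hG : G.Connected) {r : V} {γ : V ⊕ Sym2 V} {z : V}
    (h : VForm G r γ z) (s : V) : G.dist r s ≤ mixedDist G s γ + G.dist r z := by
  rcases h with rfl | ⟨c, hadj, hlev, rfl⟩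
  · rw [mixedDist_inl]
    have t1 : G.dist r s ≤ G.dist r z + G.dist z s := hG.dist_triangle
    have c1 : G.dist z s = G.dist s z := SimpleGraph.dist_comm
    omega
  · rw [mixedDist_inr]
    have t1 : G.dist r s ≤ G.dist r c + G.dist c s := hG.dist_triangle
    have t2 : G.dist r s ≤ G.dist r z + G.dist z s := hG.dist_triangle
    have c1 : G.dist c s = G.dist s c := SimpleGraph.dist_comm
    have c2 : G.dist z s = G.dist s z := SimpleGraph.dist_comm
    omega

lemma vform_B {G : SimpleGraph V} {r : V} {γ : V ⊕ Sym2 V} {z : V}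
    (h : VForm G r γ z) (s : V) : mixedDist G s γ ≤ G.dist s z := by
  rcases h with rfl | ⟨c, _, _, rfl⟩
  · exact le_of_eq (mixedDist_inl G s z)
  · rw [mixedDist_inr]; exact min_le_right _ _

lemma vform_C {G : SimpleGraph V} (hG : G.Connected) {r : V} {γ : V ⊕ Sym2 V} {z : V}
    (h : VForm G r γ z) (s : V) (t : ℕ) (hs : G.dist r s = t + G.dist r z)
    (hd : mixedDist G s γ = t) : G.dist s z = t := by
  rcases h with rfl | ⟨c, hadj, hlev, rfl⟩
  · rw [mixedDist_inl] at hd; exact hd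
  · rw [mixedDist_inr] at hd
    have t1 : G.dist r s ≤ G.dist r c + G.dist c s := hG.dist_triangle
    have c1 : G.dist c s = G.dist s c := SimpleGraph.dist_comm
    omega

lemma mixed_zero {G : SimpleGraph V} (hG : G.Connected) {s : V} {β : V ⊕ Sym2 V}
    (h : mixedDist G s β = 0) : β = Sum.inl s ∨ ∃ f, β = Sum.inr f ∧ s ∈ f := by
  cases β with
  | inl w =>
    left
    rw [mixedDist_inl] at h
    rw [hG.dist_eq_zero_iff.mp h]
  | inr f =>
    right
    refine ⟨f, rfl, ?_⟩
    induction f with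
    | _ c d =>
      rw [mixedDist_inr] at h
      rw [Sym2.mem_iff]
      rcases Nat.min_eq_zero_iff.mp h with h0 | h0
      · exact Or.inl (hG.dist_eq_zero_iff.mp h0)
      · exact Or.inr (hG.dist_eq_zero_iff.mp h0)

lemma lift_reach {G : SimpleGraph V} {s : Set V} :
    ∀ {a b : V} (p : G.Walk a b), (∀ x ∈ p.support, x ∈ s) →
      ∀ (ha : a ∈ s) (hb : b ∈ s), (G.induce s).Reachable ⟨a, ha⟩ ⟨b, hb⟩ := by
  intro a b p
  induction p with
  | nil => intro _ ha hb; exact SimpleGraph.Reachable.refl _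
  | @cons u x w hadj q ih =>
    intro hsup ha hb
    have hx : x ∈ s := hsup x (by simp [SimpleGraph.Walk.support_cons])
    have hstep : (G.induce s).Adj ⟨u, ha⟩ ⟨x, hx⟩ := by simpa using hadj
    exact hstep.reachable.trans
      (ih (fun y hy => hsup y (by simp [SimpleGraph.Walk.support_cons, hy])) hx hb)

lemma main_shape [Fintype V] {G : SimpleGraph V} (hG : G.Connected)
    (hδ : ∀ v : V, 2 ≤ (G.neighborSet v).ncard) (r : V) {α β : V ⊕ Sym2 V}
    (hα : IsMixedElem G α) (hβ : IsMixedElem G β) (hne : α ≠ β)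
    (heq : ∀ s ∈ S0 G r, mixedDist G s α = mixedDist G s β) :
    ∃ c z, G.Adj c z ∧ G.dist r z = G.dist r c + 1 ∧
      ((α = Sum.inl z ∧ β = Sum.inr s(c, z)) ∨ (β = Sum.inl z ∧ α = Sum.inr s(c, z))) := by
  classical
  have hkill : ∀ (γ δ : V ⊕ Sym2 V), (∀ s ∈ S0 G r, mixedDist G s γ = mixedDist G s δ) →
      δ ≠ γ → ∀ a b : V, G.Adj a b → G.dist r a = G.dist r b →
      γ = Sum.inr s(a, b) → False := by
    intro γ δ heq' hne' a b hadj hlev hγ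
    subst hγ
    have hnt : s(a, b) ∉ treeE G r := by
      intro ht
      rcases treeE_shape ht with ⟨h1, h2⟩ | ⟨h1, h2⟩
      · have := (gpar_spec hG h1).2; rw [← h2] at this; omega
      · have := (gpar_spec hG h1).2; rw [← h2] at this; omega
    obtain ⟨haS, hbS⟩ := edge_in_coF hadj hnt
    have hda : mixedDist G a (Sum.inr s(a, b)) = 0 := by
      rw [mixedDist_inr, SimpleGraph.dist_self]; simp
    have hdb : mixedDist G b (Sum.inr s(a, b)) = 0 := by
      rw [mixedDist_inr, SimpleGraph.dist_self]
      simp [SimpleGraph.dist_self]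
    have h1 := mixed_zero hG (show mixedDist G a δ = 0 by rw [← heq' a haS]; exact hda)
    have h2 := mixed_zero hG (show mixedDist G b δ = 0 by rw [← heq' b hbS]; exact hdb)
    rcases h1 with h1 | ⟨f, hf, hmem1⟩
    · rcases h2 with h2 | ⟨f, hf, hmem2⟩
      · rw [h1] at h2; exact hadj.ne (Sum.inl.inj h2)
      · rw [h1] at hf; exact Sum.inl_ne_inr hf
    · rcases h2 with h2 | ⟨f2, hf2, hmem2⟩
      · rw [hf] at h2; exact Sum.inr_ne_inl h2
      · rw [hf] at hf2
        have hff : f = f2 := Sum.inr.inj hf2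
        subst hff
        have : f = s(a, b) := (Sym2.mem_and_mem_iff hadj.ne).mp ⟨hmem1, hmem2⟩
        exact hne' (by rw [hf, this])
  have hnorm : ∀ (γ δ : V ⊕ Sym2 V), IsMixedElem G γ →
      (∀ s ∈ S0 G r, mixedDist G s γ = mixedDist G s δ) → δ ≠ γ →
      ∃ z, VForm G r γ z := by
    intro γ δ hγe heq' hne'
    cases γ with
    | inl v => exact ⟨v, Or.inl rfl⟩
    | inr e =>
      induction e with
      | _ a b =>
        have hadj : G.Adj a b := hγe
        have l1 := level_adj hG hadj r
        have l2 := level_adj hG hadj.symm r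
        rcases lt_trichotomy (G.dist r a) (G.dist r b) with hl | hl | hl
        · exact ⟨b, Or.inr ⟨a, hadj, by omega, rfl⟩⟩
        · exact (hkill _ δ heq' hne' a b hadj hl rfl).elim
        · exact ⟨a, Or.inr ⟨b, hadj.symm, by omega, by rw [Sym2.eq_swap]⟩⟩
  obtain ⟨z1, hz1⟩ := hnorm α β hα heq hne.symm
  obtain ⟨z2, hz2⟩ := hnorm β α hβ (fun s hs => (heq s hs).symm) hne
  obtain ⟨s1, hs1S, hw1⟩ := exists_witness hG hδ r z1
  obtain ⟨s2, hs2S, hw2⟩ := exists_witness hG hδ r z2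
  have k1 : mixedDist G s1 α = G.dist s1 z1 :=
    le_antisymm (vform_B hz1 s1) (by have := vform_A hG hz1 s1; omega)
  have k1' : mixedDist G s1 β = G.dist s1 z1 := by rw [← heq s1 hs1S]; exact k1
  have g1 : G.dist r z1 ≤ G.dist r z2 := by have := vform_A hG hz2 s1; omega
  have k2 : mixedDist G s2 β = G.dist s2 z2 :=
    le_antisymm (vform_B hz2 s2) (by have := vform_A hG hz2 s2; omega)
  have k2' : mixedDist G s2 α = G.dist s2 z2 := by rw [heq s2 hs2S]; exact k2
  have g2 : G.dist r z2 ≤ G.dist r z1 := by have := vform_A hG hz1 s2; omega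
  have hT : G.dist r z2 = G.dist r z1 := le_antisymm g2 g1
  have htr : ∀ s ∈ S0 G r, ∀ t, G.dist r s = t + G.dist r z1 →
      (G.dist s z1 = t ↔ G.dist s z2 = t) := by
    intro s hs t hst
    constructor
    · intro h
      have d1 : mixedDist G s α = t :=
        le_antisymm (h ▸ vform_B hz1 s) (by have := vform_A hG hz1 s; omega)
      exact vform_C hG hz2 s t (by omega) (by rw [← heq s hs]; exact d1)
    · intro h
      have d1 : mixedDist G s β = t :=
        le_antisymm (h ▸ vform_B hz2 s) (by have := vform_A hG hz2 s; omega)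
      exact vform_C hG hz1 s t hst (by rw [heq s hs]; exact d1)
  have hxv : G.dist s1 z2 = G.dist s1 z1 :=
    vform_C hG hz2 s1 (G.dist s1 z1) (by omega) k1'
  have hzz : z1 = z2 := covers_eq hG r z1 z2 (G.dist r z1) rfl hT htr
    (G.dist s1 z1) s1 hw1 rfl hxv
  subst hzz
  rcases hz1 with h1 | ⟨c, hc1, hc2, h1⟩
  · rcases hz2 with h2 | ⟨g, hg1, hg2, h2⟩
    · exact absurd (h1.trans h2.symm) hne
    · exact ⟨g, z1, hg1, hg2, Or.inl ⟨h1, h2⟩⟩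
  · rcases hz2 with h2 | ⟨g, hg1, hg2, h2⟩
    · exact ⟨c, z1, hc1, hc2, Or.inr ⟨h2, h1⟩⟩
    · exfalso
      by_cases hcg : c = g
      · subst hcg; exact hne (h1.trans h2.symm)
      · have sh : ∀ c' : V, s(c', z1) ∈ treeE G r → G.dist r z1 = G.dist r c' + 1 →
            c' = gpar G r z1 := by
          intro c' ht hl
          rcases treeE_shape ht with ⟨h1', h2'⟩ | ⟨h1', h2'⟩
          · exfalso; have := (gpar_spec hG h1').2; rw [← h2'] at this; omega
          · exact h2'
        by_cases t1 : s(c, z1) ∈ treeE G r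
        · by_cases t2 : s(g, z1) ∈ treeE G r
          · exact hcg ((sh c t1 hc2).trans (sh g t2 hg2).symm)
          · obtain ⟨hgS, _⟩ := edge_in_coF hg1 t2
            have hd0 : mixedDist G g α = 0 := by
              rw [heq g hgS, h2, mixedDist_inr, SimpleGraph.dist_self]; simp
            rw [h1] at hd0
            rcases mixed_zero hG hd0 with h | ⟨f, hf, hmem⟩
            · exact Sum.inr_ne_inl h
            · have hfe : f = s(c, z1) := (Sum.inr.inj hf).symm
              rw [hfe, Sym2.mem_iff] at hmem
              rcases hmem with h | h
              · exact hcg h.symm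
              · rw [h] at hg2; omega
        · obtain ⟨hcS, _⟩ := edge_in_coF hc1 t1
          have hd0 : mixedDist G c β = 0 := by
            rw [← heq c hcS, h1, mixedDist_inr, SimpleGraph.dist_self]; simp
          rw [h2] at hd0
          rcases mixed_zero hG hd0 with h | ⟨f, hf, hmem⟩
          · exact Sum.inr_ne_inl h
          · have hfe : f = s(g, z1) := (Sum.inr.inj hf).symm
            rw [hfe, Sym2.mem_iff] at hmem
            rcases hmem with h | h
            · exact hcg h
            · rw [h] at hc2; omega

lemma cut_resolve [Fintype V] {G : SimpleGraph V} (hG : G.Connected)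
    (hδ : ∀ v : V, 2 ≤ (G.neighborSet v).ncard) {r : V} (hcut : IsCutVertex G r)
    {c z : V} (hlev : G.dist r z = G.dist r c + 1) :
    ∃ s ∈ S0 G r, min (G.dist s c) (G.dist s z) < G.dist s z := by
  classical
  have hzr : z ≠ r := by
    intro h; rw [h, SimpleGraph.dist_self] at hlev; omega
  have hne : Nonempty {u : V | u ≠ r} := ⟨⟨z, hzr⟩⟩
  have hpre : ¬ (G.induce {u : V | u ≠ r}).Preconnected := by
    intro hp
    exact hcut ⟨hp⟩
  rw [SimpleGraph.Preconnected] at hpre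
  push_neg at hpre
  obtain ⟨a, b, hab⟩ := hpre
  have hwex : ¬ (G.induce {u : V | u ≠ r}).Reachable a ⟨z, hzr⟩ ∨
      ¬ (G.induce {u : V | u ≠ r}).Reachable b ⟨z, hzr⟩ := by
    by_contra h
    push_neg at h
    exact hab (h.1.trans h.2.symm)
  obtain ⟨w, hw⟩ : ∃ w : {u : V | u ≠ r},
      ¬ (G.induce {u : V | u ≠ r}).Reachable w ⟨z, hzr⟩ := by
    rcases hwex with h | h
    · exact ⟨a, h⟩
    · exact ⟨b, h⟩
  obtain ⟨s, hsS, hseq⟩ := exists_witness hG hδ r w.val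
  have hwlev : 1 ≤ G.dist r w.val :=
    Nat.pos_of_ne_zero fun h => w.prop ((hG.dist_eq_zero_iff.mp h).symm)
  obtain ⟨p, hp⟩ := hG.exists_walk_length_eq_dist s w.val
  have hsup : ∀ x ∈ p.support, x ≠ r := by
    intro x hx hxr
    obtain ⟨q1, q2, hq⟩ := SimpleGraph.Walk.mem_support_iff_exists_append.mp hx
    have l1 : G.dist s x ≤ q1.length := SimpleGraph.dist_le q1
    have l2 : G.dist x w.val ≤ q2.length := SimpleGraph.dist_le q2
    have l3 : q1.length + q2.length = G.dist s w.val := by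
      rw [← SimpleGraph.Walk.length_append, ← hq]; exact hp
    have e1 : G.dist s x = G.dist s r := by rw [hxr]
    have e2 : G.dist x ↑w = G.dist r ↑w := by rw [hxr]
    have c2 : G.dist s r = G.dist r s := SimpleGraph.dist_comm
    omega
  have hsr : s ≠ r := hsup s p.start_mem_support
  have hreach1 : (G.induce {u : V | u ≠ r}).Reachable ⟨s, hsr⟩ ⟨w.val, w.prop⟩ :=
    lift_reach p (fun x hx => hsup x hx) hsr w.prop
  have hdistz : G.dist s r + G.dist r z ≤ G.dist s z := by
    obtain ⟨q, hq⟩ := hG.exists_walk_length_eq_dist s z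
    by_cases hr : r ∈ q.support
    · have t1 := SimpleGraph.dist_le (q.takeUntil r hr)
      have t2 := SimpleGraph.dist_le (q.dropUntil r hr)
      have t3 := congrArg SimpleGraph.Walk.length (q.take_spec hr)
      rw [SimpleGraph.Walk.length_append] at t3
      omega
    · exfalso
      have hreach2 : (G.induce {u : V | u ≠ r}).Reachable ⟨s, hsr⟩ ⟨z, hzr⟩ :=
        lift_reach (s := {u : V | u ≠ r}) q (fun x hx hxr => hr (by rw [← hxr]; exact hx))
          hsr hzr
      exact hw (hreach1.symm.trans hreach2)
  have h3 : G.dist s c ≤ G.dist s r + G.dist r c := hG.dist_triangle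
  refine ⟨s, hsS, ?_⟩
  have c4 : G.dist s r = G.dist r s := SimpleGraph.dist_comm
  omega

lemma resolving1 [Fintype V] {G : SimpleGraph V} (hG : G.Connected)
    (hδ : ∀ v : V, 2 ≤ (G.neighborSet v).ncard) (r : V) :
    IsMixedResolving G (S0 G r ∪ {r}) := by
  intro x y hx hy hne
  by_cases h : ∃ s ∈ S0 G r, mixedDist G s x ≠ mixedDist G s y
  · obtain ⟨s, hs, h⟩ := h
    exact ⟨s, Or.inl hs, h⟩
  · push_neg at h
    obtain ⟨c, z, hadj, hlev, hcase⟩ := main_shape hG hδ r hx hy hne h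
    refine ⟨r, Or.inr rfl, ?_⟩
    have hd : mixedDist G r (Sum.inl z) ≠ mixedDist G r (Sum.inr s(c, z)) := by
      rw [mixedDist_inl, mixedDist_inr]
      omega
    rcases hcase with ⟨h1, h2⟩ | ⟨h1, h2⟩
    · rw [h1, h2]; exact hd
    · rw [h1, h2]; exact hd.symm

lemma resolving2 [Fintype V] {G : SimpleGraph V} (hG : G.Connected)
    (hδ : ∀ v : V, 2 ≤ (G.neighborSet v).ncard) {r : V} (hcut : IsCutVertex G r) :
    IsMixedResolving G (S0 G r) := by
  intro x y hx hy hne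
  by_contra h
  push_neg at h
  obtain ⟨c, z, hadj, hlev, hcase⟩ := main_shape hG hδ r hx hy hne h
  obtain ⟨s, hsS, hlt⟩ := cut_resolve hG hδ hcut hlev
  have hd : mixedDist G s (Sum.inl z) ≠ mixedDist G s (Sum.inr s(c, z)) := by
    rw [mixedDist_inl, mixedDist_inr]
    omega
  rcases hcase with ⟨h1, h2⟩ | ⟨h1, h2⟩
  · exact hd (by rw [← h1, ← h2]; exact h s hsS)
  · exact hd (by rw [← h1, ← h2]; exact (h s hsS).symm)

lemma S0_card [Fintype V] {G : SimpleGraph V} (hG : G.Connected) (r : V) :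
    (S0 G r).ncard ≤ 2 * cyclomatic G := by
  classical
  have hinj : Set.InjOn (fun v => s(v, gpar G r v)) {v : V | v ≠ r} := by
    intro v hv w hw h
    simp only [Sym2.eq_iff] at h
    rcases h with ⟨h1, _⟩ | ⟨h1, h2⟩
    · exact h1
    · exfalso
      have e1 := (gpar_spec hG hv).2
      have e2 := (gpar_spec hG hw).2
      rw [h2] at e1
      rw [← h1] at e2
      omega
  have hT : (treeE G r).ncard = Fintype.card V - 1 := by
    rw [treeE, Set.ncard_image_of_injOn hinj]
    have hset : {v : V | v ≠ r} = Set.univ \ {r} := by ext v; simp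
    rw [hset, Set.ncard_diff (by simp), Set.ncard_univ, Set.ncard_singleton, Nat.card_eq_fintype_card]
  have hTE : treeE G r ⊆ G.edgeSet := by
    rintro e ⟨v, hv, rfl⟩
    exact (G.mem_edgeSet).mpr (gpar_spec hG hv).1
  have hF : (coF G r).ncard = G.edgeSet.ncard - (Fintype.card V - 1) := by
    rw [coF, Set.ncard_diff hTE, hT]
  have hle : (treeE G r).ncard ≤ G.edgeSet.ncard := Set.ncard_le_ncard hTE
  have hcard1 : 1 ≤ Fintype.card V := Fintype.card_pos_iff.mpr hG.nonempty
  have hend : ∀ F : Set (Sym2 V), F.Finite → (endpoints F).ncard ≤ 2 * F.ncard := by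
    intro F hFin
    refine Set.Finite.induction_on (motive := fun F _ => (endpoints F).ncard ≤ 2 * F.ncard)
      F hFin ?_ ?_
    · have h0 : endpoints (∅ : Set (Sym2 V)) = ∅ := by
        ext v; simp [endpoints]
      simp [h0]
    · intro e F' hnot hfin ih
      have hsub : endpoints (insert e F') ⊆ {x | x ∈ e} ∪ endpoints F' := by
        rintro v ⟨f, hf, hv⟩
        rcases hf with rfl | hf
        · exact Or.inl hv
        · exact Or.inr ⟨f, hf, hv⟩
      have h2 : ({x | x ∈ e} : Set V).ncard ≤ 2 := by
        induction e with
        | _ a b =>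
          have hab : {x | x ∈ s(a, b)} = {a, b} := by
            ext v; simp [Sym2.mem_iff]
          rw [hab]
          exact (Set.ncard_insert_le a {b}).trans (by simp)
      calc (endpoints (insert e F')).ncard
          ≤ ({x | x ∈ e} ∪ endpoints F').ncard :=
            Set.ncard_le_ncard hsub (Set.toFinite _)
        _ ≤ ({x | x ∈ e} : Set V).ncard + (endpoints F').ncard := Set.ncard_union_le _ _
        _ ≤ 2 + 2 * F'.ncard := by omega
        _ = 2 * (insert e F').ncard := by
            rw [Set.ncard_insert_of_notMem hnot (Set.toFinite _)]; ring
  have hS : (S0 G r).ncard ≤ 2 * (coF G r).ncard := hend _ (Set.toFinite _)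
  unfold cyclomatic
  omega

end MDimAux

theorem stmt_11 [Fintype V] (G : SimpleGraph V) (hG : G.Connected)
    (hδ : ∀ v : V, 2 ≤ (G.neighborSet v).ncard) :
    mixedMetricDim G ≤ 2 * cyclomatic G + 1 ∧
    ((∃ v : V, IsCutVertex G v) → mixedMetricDim G ≤ 2 * cyclomatic G) := by
  classical
  obtain ⟨r0⟩ : Nonempty V := hG.nonempty
  constructor
  · have h1 : mixedMetricDim G ≤ (S0 G r0 ∪ {r0}).ncard :=
      Nat.sInf_le ⟨_, resolving1 hG hδ r0, rfl⟩
    have h2 : (S0 G r0 ∪ {r0}).ncard ≤ (S0 G r0).ncard + 1 := by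
      rw [Set.union_singleton]
      exact Set.ncard_insert_le _ _
    have h3 := S0_card hG r0
    omega
  · rintro ⟨v, hv⟩
    have h1 : mixedMetricDim G ≤ (S0 G v).ncard :=
      Nat.sInf_le ⟨_, resolving2 hG hδ hv, rfl⟩
    have h3 := S0_card hG v
    omega
end
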